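/- arXiv:2112.00776 — 6 statements merged into one kernel-verified Lean document; each statement's English description precedes it below -/
import Mathlib

section
/- Let Δ := (Mz − Mp)/γ − (Cy − Cp). If Mz − Mp − γCy ∈ γAp, then Δ ∈ Ap + Cp. Moreover (regardless of the inclusion defining p), ‖Δ‖_{M⁻¹} ≤ (1/(2γ))·‖2(z − p) − βγ(y − p)‖_M + (β/2)·‖y − p‖_M. -/
open scoped RealInnerProductSpace Pointwise

/-- The `M`-induced norm `‖w‖_M = √⟪w, M w⟫`. -/
noncomputable def mnorm {H : Type*} [NormedAddCommGroup H] [InnerProductSpace ℝ H]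
    (M : H →L[ℝ] H) (w : H) : ℝ :=
  Real.sqrt ⟪w, M w⟫

section aux
variable {H : Type*} [NormedAddCommGroup H] [InnerProductSpace ℝ H]

lemma mnorm_nonneg' (T : H →L[ℝ] H) (x : H) : 0 ≤ mnorm T x := Real.sqrt_nonneg _

lemma mnorm_sq' (T : H →L[ℝ] H) {x : H} (h : 0 ≤ ⟪x, T x⟫) : mnorm T x ^ 2 = ⟪x, T x⟫ :=
  Real.sq_sqrt h

lemma mnorm_cs' (T : H →L[ℝ] H) (hsym : ∀ a b : H, ⟪T a, b⟫ = ⟪a, T b⟫)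
    (hpos : ∀ x : H, 0 ≤ ⟪x, T x⟫) (a b : H) :
    ⟪a, T b⟫ ≤ mnorm T a * mnorm T b := by
  have hba : ⟪b, T a⟫ = ⟪a, T b⟫ := by rw [← hsym b a, real_inner_comm]
  have key : ∀ t : ℝ, 0 ≤ ⟪b, T b⟫ * (t * t) + (2 * ⟪a, T b⟫) * t + ⟪a, T a⟫ := by
    intro t
    have h := hpos (a + t • b)
    simp only [map_add, map_smul, inner_add_left, inner_add_right,
      real_inner_smul_left, real_inner_smul_right] at h
    rw [hba] at h
    nlinarith [h]
  have hd := discrim_le_zero key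
  rw [discrim] at hd
  have h1 : ⟪a, T b⟫ ^ 2 ≤ ⟪a, T a⟫ * ⟪b, T b⟫ := by nlinarith
  calc ⟪a, T b⟫ ≤ |⟪a, T b⟫| := le_abs_self _
    _ = Real.sqrt (⟪a, T b⟫ ^ 2) := (Real.sqrt_sq_eq_abs _).symm
    _ ≤ Real.sqrt (⟪a, T a⟫ * ⟪b, T b⟫) := Real.sqrt_le_sqrt h1
    _ = mnorm T a * mnorm T b := by rw [Real.sqrt_mul (hpos a)]; rfl

lemma mnorm_add_le' (T : H →L[ℝ] H) (hsym : ∀ a b : H, ⟪T a, b⟫ = ⟪a, T b⟫)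
    (hpos : ∀ x : H, 0 ≤ ⟪x, T x⟫) (a b : H) :
    mnorm T (a + b) ≤ mnorm T a + mnorm T b := by
  have hcs := mnorm_cs' T hsym hpos a b
  have hba : ⟪b, T a⟫ = ⟪a, T b⟫ := by rw [← hsym b a, real_inner_comm]
  have ha := mnorm_sq' T (hpos a)
  have hb := mnorm_sq' T (hpos b)
  have h2 : ⟪a + b, T (a + b)⟫ ≤ (mnorm T a + mnorm T b) ^ 2 := by
    simp only [map_add, inner_add_left, inner_add_right]
    nlinarith [hcs, hba, ha, hb]
  calc mnorm T (a + b) = Real.sqrt ⟪a + b, T (a + b)⟫ := rfl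
    _ ≤ Real.sqrt ((mnorm T a + mnorm T b) ^ 2) := Real.sqrt_le_sqrt h2
    _ = mnorm T a + mnorm T b := by
        rw [Real.sqrt_sq (add_nonneg (mnorm_nonneg' T a) (mnorm_nonneg' T b))]

lemma mnorm_smul' (T : H →L[ℝ] H) (c : ℝ) (x : H) : mnorm T (c • x) = |c| * mnorm T x := by
  have h : ⟪c • x, T (c • x)⟫ = c ^ 2 * ⟪x, T x⟫ := by
    rw [map_smul, real_inner_smul_left, real_inner_smul_right]; ring
  unfold mnorm
  rw [h, Real.sqrt_mul (sq_nonneg c), Real.sqrt_sq_eq_abs]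

end aux

/-- With `Δ := (Mz − Mp)/γ − (Cy − Cp)`: if `Mz − Mp − γCy ∈ γAp`, then
`Δ ∈ Ap + Cp`; moreover (regardless of the inclusion),
`‖Δ‖_{M⁻¹} ≤ (1/(2γ))‖2(z − p) − βγ(y − p)‖_M + (β/2)‖y − p‖_M`. -/
theorem delta_in_graph_and_estimate
    {H : Type*} [NormedAddCommGroup H] [InnerProductSpace ℝ H] [CompleteSpace H]
    (M : H →L[ℝ] H)
    (hMsa : ∀ a b : H, ⟪M a, b⟫ = ⟪a, M b⟫)
    (hMpos : ∃ c > (0:ℝ), ∀ a : H, ⟪a, M a⟫ ≥ c * ‖a‖ ^ 2)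
    (Minv : H →L[ℝ] H)
    (hMinv₁ : ∀ a : H, Minv (M a) = a)
    (hMinv₂ : ∀ a : H, M (Minv a) = a)
    (β : ℝ) (hβ : 0 < β)
    (A : H → Set H)
    (hAmono : ∀ a b ua vb : H, ua ∈ A a → vb ∈ A b → ⟪ua - vb, a - b⟫ ≥ 0)
    (C : H → H)
    (hC : ∀ a b : H, ⟪C a - C b, a - b⟫ ≥ (1 / β) * mnorm Minv (C a - C b) ^ 2)
    (γ : ℝ) (hγ : 0 < γ)
    (y z p : H)
    (Δ : H) (hΔ : Δ = γ⁻¹ • (M z - M p) - (C y - C p)) :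
    (M z - M p - γ • C y ∈ γ • A p → ∃ a ∈ A p, Δ = a + C p) ∧
      mnorm Minv Δ ≤ (1 / (2 * γ)) * mnorm M ((2:ℝ) • (z - p) - (β * γ) • (y - p))
        + (β / 2) * mnorm M (y - p) := by
  obtain ⟨c, hc, hMc⟩ := hMpos
  have hMnn : ∀ x : H, 0 ≤ ⟪x, M x⟫ := fun x =>
    le_trans (by positivity) (hMc x)
  have hIsym : ∀ a b : H, ⟪Minv a, b⟫ = ⟪a, Minv b⟫ := by
    intro a b
    have h := hMsa (Minv a) (Minv b)
    rw [hMinv₂, hMinv₂] at h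
    exact h.symm
  have hInn : ∀ x : H, 0 ≤ ⟪x, Minv x⟫ := by
    intro x
    have h : ⟪x, Minv x⟫ = ⟪Minv x, M (Minv x)⟫ := by
      conv_lhs => rw [← hMinv₂ x]
      rw [hMinv₁, real_inner_comm]
    rw [h]; exact hMnn _
  have hIM : ∀ x : H, mnorm Minv (M x) = mnorm M x := by
    intro x
    unfold mnorm
    rw [hMinv₁, real_inner_comm]
  constructor
  · rintro ⟨u, hu, hup⟩
    refine ⟨u, hu, ?_⟩
    have hup' : γ • u = M z - M p - γ • C y := hup
    have : M z - M p = γ • u + γ • C y := by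
      rw [hup']; abel
    rw [hΔ, this, smul_add, smul_smul, smul_smul, inv_mul_cancel₀ hγ.ne', one_smul, one_smul]
    abel
  · set v := y - p with hv
    set D := C y - C p with hD
    set u := (2:ℝ) • (z - p) - (β * γ) • v with hu
    set E := (β / 2) • M v - D with hE
    have hdec : Δ = (1 / (2 * γ)) • M u + E := by
      rw [hΔ, hu, hE, hv, hD]
      simp only [map_sub, map_smul]
      match_scalars <;> (field_simp; try ring)
    -- estimate for E
    have hMvMinv : ⟪M v, Minv (M v)⟫ = ⟪v, M v⟫ := by rw [hMinv₁, real_inner_comm]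
    have hMvD : ⟪M v, Minv D⟫ = ⟪v, D⟫ := by rw [hMsa v (Minv D), hMinv₂]
    have hDMv : ⟪D, Minv (M v)⟫ = ⟪v, D⟫ := by rw [hMinv₁, real_inner_comm]
    have hcoco : ⟪D, v⟫ ≥ (1 / β) * ⟪D, Minv D⟫ := by
      have h := hC y p
      rw [mnorm_sq' Minv (hInn (C y - C p))] at h
      exact h
    have hEexp : ⟪E, Minv E⟫ = (β / 2) ^ 2 * ⟪v, M v⟫ - β * ⟪D, v⟫ + ⟪D, Minv D⟫ := by
      rw [hE]
      simp only [map_sub, map_smul, inner_sub_left, inner_sub_right,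
        real_inner_smul_left, real_inner_smul_right, hMvMinv, hMvD, hDMv]
      rw [real_inner_comm D v]
      ring
    have hEle : ⟪E, Minv E⟫ ≤ (β / 2) ^ 2 * ⟪v, M v⟫ := by
      rw [hEexp]
      have : β * ((1 / β) * ⟪D, Minv D⟫) = ⟪D, Minv D⟫ := by field_simp
      nlinarith [hcoco, hβ]
    have hEnorm : mnorm Minv E ≤ (β / 2) * mnorm M v := by
      calc mnorm Minv E = Real.sqrt ⟪E, Minv E⟫ := rfl
        _ ≤ Real.sqrt ((β / 2) ^ 2 * ⟪v, M v⟫) := Real.sqrt_le_sqrt hEle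
        _ = (β / 2) * mnorm M v := by
            rw [Real.sqrt_mul (sq_nonneg _), Real.sqrt_sq (by positivity)]
            rfl
    calc mnorm Minv Δ = mnorm Minv ((1 / (2 * γ)) • M u + E) := by rw [hdec]
      _ ≤ mnorm Minv ((1 / (2 * γ)) • M u) + mnorm Minv E :=
          mnorm_add_le' Minv hIsym hInn _ _
      _ = (1 / (2 * γ)) * mnorm M u + mnorm Minv E := by
          rw [mnorm_smul', abs_of_pos (by positivity), hIM]
      _ ≤ (1 / (2 * γ)) * mnorm M u + (β / 2) * mnorm M v := by linarith
end

section
/- Let β > 0, γ > 0, λ > 0 with 2 − λγβ > 0 and 4 − 2λ − γβ > 0. Let x, u, v, x* ∈ H and set y = x + u, z = x + ((1 − λ)γβ/(2 − λγβ))u + v. Suppose p ∈ H satisfies Mz − Mp − γCy ∈ γAp, suppose −Cx* ∈ Ax*, and set x⁺ = x + λ(p − z) and ℓ² := (λ(4 − 2λ − γβ)/2)·‖p − x + (λγβ/(2 − λγβ))u − (2(1 − λ)/(4 − 2λ − γβ))v‖_M². Then ‖x⁺ − x*‖_M² + ℓ² ≤ ‖x − x*‖_M² + (λγβ/(2 −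 λγβ))‖u‖_M² + (λ(2 − λγβ)/(4 − 2λ − γβ))‖v‖_M². -/
open scoped RealInnerProductSpace Pointwise

set_option maxHeartbeats 1000000 in
/-- one-step Lyapunov inequality for forward–backward with deviations. -/
theorem lyapunov_one_step
    {H : Type*} [NormedAddCommGroup H] [InnerProductSpace ℝ H] [CompleteSpace H]
    (M : H →L[ℝ] H)
    (hMsa : ∀ a b : H, ⟪M a, b⟫ = ⟪a, M b⟫)
    (hMpos : ∃ c > (0:ℝ), ∀ a : H, ⟪a, M a⟫ ≥ c * ‖a‖ ^ 2)
    (Minv : H →L[ℝ] H)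
    (hMinv₁ : ∀ a : H, Minv (M a) = a)
    (hMinv₂ : ∀ a : H, M (Minv a) = a)
    (β γ lam : ℝ) (hβ : 0 < β) (hγ : 0 < γ) (hlam : 0 < lam)
    (h1 : 0 < 2 - lam * γ * β) (h2 : 0 < 4 - 2 * lam - γ * β)
    (A : H → Set H)
    (hAmono : ∀ a b ua vb : H, ua ∈ A a → vb ∈ A b → ⟪ua - vb, a - b⟫ ≥ 0)
    (C : H → H)
    (hC : ∀ a b : H, ⟪C a - C b, a - b⟫ ≥ (1 / β) * mnorm Minv (C a - C b) ^ 2)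
    (x u v xs y z p xplus : H)
    (hy : y = x + u)
    (hz : z = x + (((1 - lam) * γ * β) / (2 - lam * γ * β)) • u + v)
    (hp : M z - M p - γ • C y ∈ γ • A p)
    (hxs : -C xs ∈ A xs)
    (hxplus : xplus = x + lam • (p - z))
    (ℓsq : ℝ)
    (hℓ : ℓsq = (lam * (4 - 2 * lam - γ * β) / 2) *
      mnorm M (p - x + ((lam * γ * β) / (2 - lam * γ * β)) • u
        - ((2 * (1 - lam)) / (4 - 2 * lam - γ * β)) • v) ^ 2) :
    mnorm M (xplus - xs) ^ 2 + ℓsq ≤ mnorm M (x - xs) ^ 2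
      + (lam * γ * β / (2 - lam * γ * β)) * mnorm M u ^ 2
      + (lam * (2 - lam * γ * β) / (4 - 2 * lam - γ * β)) * mnorm M v ^ 2 := by
  subst hy hz hxplus
  obtain ⟨c, hc, hcall⟩ := hMpos
  have hQ : ∀ t : H, (0:ℝ) ≤ ⟪t, M t⟫ := fun t =>
    le_trans (by positivity) (hcall t)
  have hm2 : ∀ t : H, mnorm M t ^ 2 = ⟪t, M t⟫ := fun t => Real.sq_sqrt (hQ t)
  have sy : ∀ a c : H, ⟪a, M c⟫ = ⟪c, M a⟫ := fun a c => by
    rw [← hMsa]; exact real_inner_comm _ _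
  set y := x + u with hy
  set z := x + (((1 - lam) * γ * β) / (2 - lam * γ * β)) • u + v with hz
  set W : H := Minv (C y - C xs) with hW
  have hMW : M W = C y - C xs := hMinv₂ _
  -- monotonicity
  rw [Set.mem_smul_set] at hp
  obtain ⟨a, ha, hga⟩ := hp
  have hmono := hAmono p xs a (-C xs) ha hxs
  have key1 : 0 ≤ ⟪z - p - γ • W, M (p - xs)⟫ := by
    have h0 : (0:ℝ) ≤ γ * ⟪a - -C xs, p - xs⟫ := mul_nonneg hγ.le hmono
    have he : ⟪z - p - γ • W, M (p - xs)⟫ = γ * ⟪a - -C xs, p - xs⟫ := by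
      have hMz : M (z - p - γ • W) = γ • (a - -C xs) := by
        simp only [map_sub, map_smul, hMW]
        have h' : M z - M p = γ • a + γ • C y := by rw [hga]; abel
        rw [h', smul_sub, sub_neg_eq_add, smul_add]
        abel
      rw [← hMsa, hMz, real_inner_smul_left]
    linarith
  -- cocoercivity
  have hm2' : mnorm Minv (C y - C xs) ^ 2 = ⟪W, M W⟫ := by
    have he : ⟪C y - C xs, Minv (C y - C xs)⟫ = ⟪W, M W⟫ := by
      conv_lhs => rw [← hW, ← hMW]
      rw [hMsa]
    rw [mnorm, he, Real.sq_sqrt (hQ W)]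
  have key2 : 0 ≤ ⟪W, M (y - xs)⟫ - (1/β) * ⟪W, M W⟫ := by
    have h := hC y xs
    rw [hm2', ← hMW, hMsa] at h
    linarith
  have key3 : 0 ≤ ⟪x + u - p - (2/β) • W, M (x + u - p - (2/β) • W)⟫ :=
    hQ _
  rw [hℓ]
  simp only [hm2]
  have hmain :
      (⟪x - xs, M (x - xs)⟫ + (lam * γ * β / (2 - lam * γ * β)) * ⟪u, M u⟫
        + (lam * (2 - lam * γ * β) / (4 - 2 * lam - γ * β)) * ⟪v, M v⟫)
      - (⟪x + lam • (p - z) - xs, M (x + lam • (p - z) - xs)⟫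
        + (lam * (4 - 2 * lam - γ * β) / 2) *
          ⟪p - x + ((lam * γ * β) / (2 - lam * γ * β)) • u
            - ((2 * (1 - lam)) / (4 - 2 * lam - γ * β)) • v,
           M (p - x + ((lam * γ * β) / (2 - lam * γ * β)) • u
            - ((2 * (1 - lam)) / (4 - 2 * lam - γ * β)) • v)⟫)
      = 2 * lam * ⟪z - p - γ • W, M (p - xs)⟫
        + 2 * lam * γ * (⟪W, M (y - xs)⟫ - (1/β) * ⟪W, M W⟫)
        + (lam * γ * β / 2) *
          ⟪x + u - p - (2/β) • W, M (x + u - p - (2/β) • W)⟫ := by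
    simp only [hy, hz, map_add, map_sub, map_smul, inner_add_left, inner_add_right,
      inner_sub_left, inner_sub_right, real_inner_smul_left, real_inner_smul_right]
    simp only [sy u x, sy v x, sy v u, sy xs x, sy xs u, sy xs v,
      sy p x, sy p u, sy p v, sy p xs, sy W x, sy W u, sy W v, sy W xs, sy W p]
    set a1 : ℝ := ⟪x, M x⟫ with ha1
    set a2 : ℝ := ⟪x, M u⟫ with ha2
    set a3 : ℝ := ⟪x, M v⟫ with ha3
    set a4 : ℝ := ⟪x, M xs⟫ with ha4
    set a5 : ℝ := ⟪x, M p⟫ with ha5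
    set a6 : ℝ := ⟪x, M W⟫ with ha6
    set a7 : ℝ := ⟪u, M u⟫ with ha7
    set a8 : ℝ := ⟪u, M v⟫ with ha8
    set a9 : ℝ := ⟪u, M xs⟫ with ha9
    set a10 : ℝ := ⟪u, M p⟫ with ha10
    set a11 : ℝ := ⟪u, M W⟫ with ha11
    set a12 : ℝ := ⟪v, M v⟫ with ha12
    set a13 : ℝ := ⟪v, M xs⟫ with ha13
    set a14 : ℝ := ⟪v, M p⟫ with ha14
    set a15 : ℝ := ⟪v, M W⟫ with ha15
    set a16 : ℝ := ⟪xs, M xs⟫ with ha16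
    set a17 : ℝ := ⟪xs, M p⟫ with ha17
    set a18 : ℝ := ⟪xs, M W⟫ with ha18
    set a19 : ℝ := ⟪p, M p⟫ with ha19
    set a20 : ℝ := ⟪p, M W⟫ with ha20
    set a21 : ℝ := ⟪W, M W⟫ with ha21
    have hi1 : (2 - lam * γ * β) * (2 - lam * γ * β)⁻¹ = 1 := mul_inv_cancel₀ h1.ne'
    have hi2 : (4 - 2 * lam - γ * β) * (4 - 2 * lam - γ * β)⁻¹ = 1 := mul_inv_cancel₀ h2.ne'
    have hib : β * β⁻¹ = 1 := mul_inv_cancel₀ hβ.ne'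
    linear_combination (2*lam*a8 + (-8)*lam*(4 - 2 * lam - γ * β)⁻¹*a8 + lam*γ*β*a2 + (1/2)*lam*γ*β*a7 + (-1)*lam*γ*β*a10 + 2*lam*γ*β*(4 - 2 * lam - γ * β)⁻¹*a8 + (-2)*lam*lam*a8 + 12*lam*lam*(4 - 2 * lam - γ * β)⁻¹*a8 + (-2)*lam*lam*γ*β*(4 - 2 * lam - γ * β)⁻¹*a8 + (-1/2)*lam*lam*γ*γ*β*β*(2 - lam * γ * β)⁻¹*a7 + (-4)*lam*lam*lam*(4 - 2 * lam - γ * β)⁻¹*a8) * hi1 + ((-2)*lam*a3 + (-2)*lam*a8 + 2*lam*a14 + (-2)*lam*(4 - 2 * lam - γ * β)⁻¹*a12 + 4*lam*(2 - lam * γ * β)⁻¹*a8 + 2*lam*lam*a3 + 2*lam*lam*a8 + lam*lam*a12 + (-2)*lam*lam*a14 + 4*lam*lam*(4 - 2 * lam - γ * β)⁻¹*a12 + (-4)*lam*lam*(2 - lam * γ * β)⁻¹*a8 + (-2)*lam*lam*lam*(4 - 2 * lam - γ * β)⁻¹*a12) * hi2 + (2*lam*γ*a6 + 2*lam*γ*a11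 + (-2)*lam*γ*a20 + (-2)*lam*γ*β⁻¹*a21) * hib
  have t1 : 0 ≤ 2 * lam * ⟪z - p - γ • W, M (p - xs)⟫ :=
    mul_nonneg (by positivity) key1
  have t2 : 0 ≤ 2 * lam * γ * (⟪W, M (y - xs)⟫ - (1/β) * ⟪W, M W⟫) :=
    mul_nonneg (by positivity) key2
  have t3 : 0 ≤ (lam * γ * β / 2) *
      ⟪x + u - p - (2/β) • W, M (x + u - p - (2/β) • W)⟫ :=
    mul_nonneg (by positivity) key3
  linarith
end

section
/- For every x* ∈ zer(A + C) and every n ≥ 1, the iterates of the forward–backward algorithm with deviations satisfy ‖x_{n+1} − x*‖_M² + ℓ_n² ≤ ‖x_n − x*‖_M² + ζ_{n−1}·ℓ_{n−1}². -/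
open scoped RealInnerProductSpace Pointwise

/-!
With `xs` a zero of `A + C` and `t = γₙβ`, monotonicity of `A` at the resolvent step and
cocoercivity of `C` (through Young's inequality `0 ≤ ‖c + (β/2) M w‖²_{M⁻¹}`) give
`0 ≤ ⟪M zₙ - M pₙ, pₙ - xs⟫ + (t/4)‖pₙ - yₙ‖²_M`.
Expanding all squares, `‖xₙ₊₁ - xs‖²_M + ℓₙ²` plus `2λₙ` times this quantity equals
`‖xₙ - xs‖²_M` plus exactly the weighted deviation norms of `uₙ, vₙ` that the norm condition of
step `n - 1` bounds by `ζₙ₋₁ ℓₙ₋₁²`.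
-/

lemma stepsize_denominators_pos {ε l γ β : ℝ} (hε : 0 < ε) (hγ : 0 < γ) (hβ : 0 < β)
    (hl : l ≤ 2 - γ * β / 2 - ε / 2) : 0 < 2 - l * γ * β ∧ 0 < 4 - 2 * l - γ * β := by
  have ht : 0 < γ * β := mul_pos hγ hβ
  refine ⟨?_, by linarith⟩
  -- `2 - l γβ ≥ (γβ - 2)² / 2 + ε γβ / 2`
  nlinarith [mul_le_mul_of_nonneg_right hl ht.le, sq_nonneg (γ * β - 2), mul_pos hε ht]

section

variable {H : Type*} [NormedAddCommGroup H] [InnerProductSpace ℝ H] {M Minv : H →L[ℝ] H}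

lemma mnorm_sq (hM : ∀ a, 0 ≤ ⟪a, M a⟫) (w : H) : mnorm M w ^ 2 = ⟪w, M w⟫ :=
  Real.sq_sqrt (hM w)

lemma inner_inverse_self_nonneg (hM : ∀ a, 0 ≤ ⟪a, M a⟫) (hMinv : ∀ a, M (Minv a) = a)
    (w : H) : 0 ≤ ⟪w, Minv w⟫ := by
  simpa [hMinv, real_inner_comm] using hM (Minv w)

/-- Young's inequality in the form `0 ≤ ‖c + (β/2) M w‖²_{M⁻¹}`. -/
lemma inner_inverse_add_inner_add_nonneg (hMsa : ∀ a b : H, ⟪M a, b⟫ = ⟪a, M b⟫)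
    (hM : ∀ a, 0 ≤ ⟪a, M a⟫) (hMinv₁ : ∀ a, Minv (M a) = a) (hMinv₂ : ∀ a, M (Minv a) = a)
    (β : ℝ) (c w : H) :
    0 ≤ ⟪c, Minv c⟫ + β * ⟪c, w⟫ + β ^ 2 / 4 * ⟪w, M w⟫ := by
  have h := inner_inverse_self_nonneg hM hMinv₂ (c + (β / 2) • M w)
  have hcross : ⟪M w, Minv c⟫ = ⟪c, w⟫ := by rw [hMsa, hMinv₂, real_inner_comm]
  simp only [map_add, map_smul, hMinv₁, inner_add_left, inner_add_right, real_inner_smul_left,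
    real_inner_smul_right, hcross, hMsa w] at h
  linarith

lemma cocoercive_inner_add_nonneg (hMsa : ∀ a b : H, ⟪M a, b⟫ = ⟪a, M b⟫)
    (hM : ∀ a, 0 ≤ ⟪a, M a⟫) (hMinv₁ : ∀ a, Minv (M a) = a) (hMinv₂ : ∀ a, M (Minv a) = a)
    {β : ℝ} (hβ : 0 < β) {C : H → H}
    (hC : ∀ a b : H, ⟪C a - C b, a - b⟫ ≥ (1 / β) * mnorm Minv (C a - C b) ^ 2) (y xs p : H) :
    0 ≤ ⟪C y - C xs, p - xs⟫ + β / 4 * ⟪p - y, M (p - y)⟫ := by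
  have hMinv : ∀ a, 0 ≤ ⟪a, Minv a⟫ := inner_inverse_self_nonneg hM hMinv₂
  have hcoco : ⟪C y - C xs, Minv (C y - C xs)⟫ ≤ β * ⟪C y - C xs, y - xs⟫ := by
    have h := hC y xs
    rwa [mnorm_sq hMinv, ge_iff_le, one_div, inv_mul_le_iff₀ hβ] at h
  have hyoung :=
    inner_inverse_add_inner_add_nonneg hMsa hM hMinv₁ hMinv₂ β (C y - C xs) (p - y)
  have hsplit : ⟪C y - C xs, p - xs⟫ = ⟪C y - C xs, y - xs⟫ + ⟪C y - C xs, p - y⟫ := by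
    rw [← inner_add_right, sub_add_sub_cancel']
  suffices 0 ≤ β * (⟪C y - C xs, p - xs⟫ + β / 4 * ⟪p - y, M (p - y)⟫) from
    nonneg_of_mul_nonneg_right (by linarith) hβ
  rw [mul_add, hsplit]
  linarith

lemma inner_resolvent_step_ge {A : H → Set H}
    (hAmono : ∀ a b ua vb : H, ua ∈ A a → vb ∈ A b → ⟪ua - vb, a - b⟫ ≥ 0)
    {C : H → H} {γ : ℝ} (hγ : 0 ≤ γ) {y z p xs : H}
    (hp : M z - M p - γ • C y ∈ γ • A p) (hxs : -C xs ∈ A xs) :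
    γ * ⟪C y - C xs, p - xs⟫ ≤ ⟪M z - M p, p - xs⟫ := by
  obtain ⟨w, hw, hweq⟩ := Set.mem_smul_set.mp hp
  have hMzp : M z - M p = γ • (w - -C xs) + γ • (C y - C xs) := by
    rw [← smul_add, sub_neg_eq_add, add_add_sub_cancel, smul_add, hweq, sub_add_cancel]
  rw [hMzp, inner_add_left, real_inner_smul_left, real_inner_smul_left]
  linarith [mul_nonneg hγ (hAmono p xs w (-C xs) hw hxs)]

lemma inner_forwardBackward_step_nonneg (hMsa : ∀ a b : H, ⟪M a, b⟫ = ⟪a, M b⟫)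
    (hM : ∀ a, 0 ≤ ⟪a, M a⟫) (hMinv₁ : ∀ a, Minv (M a) = a) (hMinv₂ : ∀ a, M (Minv a) = a)
    {β : ℝ} (hβ : 0 < β) {A : H → Set H}
    (hAmono : ∀ a b ua vb : H, ua ∈ A a → vb ∈ A b → ⟪ua - vb, a - b⟫ ≥ 0) {C : H → H}
    (hC : ∀ a b : H, ⟪C a - C b, a - b⟫ ≥ (1 / β) * mnorm Minv (C a - C b) ^ 2)
    {γ : ℝ} (hγ : 0 ≤ γ) {y z p xs : H}
    (hp : M z - M p - γ • C y ∈ γ • A p) (hxs : -C xs ∈ A xs) :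
    0 ≤ ⟪M z - M p, p - xs⟫ + γ * β / 4 * ⟪p - y, M (p - y)⟫ := by
  have hres := inner_resolvent_step_ge hAmono hγ hp hxs
  have hcoco := cocoercive_inner_add_nonneg hMsa hM hMinv₁ hMinv₂ hβ hC y xs p
  linarith [mul_nonneg hγ hcoco]

lemma forwardBackward_lyapunov_identity (hMsa : ∀ a b : H, ⟪M a, b⟫ = ⟪a, M b⟫)
    {l γ β : ℝ} (h₁ : 2 - l * γ * β ≠ 0) (h₂ : 4 - 2 * l - γ * β ≠ 0) {x x' xs u v y z p : H}
    (hy : y = x + u) (hz : z = x + ((1 - l) * γ * β / (2 - l * γ * β)) • u + v)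
    (hx' : x' = x + l • (p - z)) :
    ⟪x' - xs, M (x' - xs)⟫
      + l * (4 - 2 * l - γ * β) / 2
        * ⟪p - x + (l * γ * β / (2 - l * γ * β)) • u - (2 * (1 - l) / (4 - 2 * l - γ * β)) • v,
          M (p - x + (l * γ * β / (2 - l * γ * β)) • u - (2 * (1 - l) / (4 - 2 * l - γ * β)) • v)⟫
      + 2 * l * (⟪M z - M p, p - xs⟫ + γ * β / 4 * ⟪p - y, M (p - y)⟫)
    = ⟪x - xs, M (x - xs)⟫ + l * γ * β / (2 - l * γ * β) * ⟪u, M u⟫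
      + l * (2 - l * γ * β) / (4 - 2 * l - γ * β) * ⟪v, M v⟫ := by
  have hsym : ∀ a b : H, ⟪a, M b⟫ = ⟪b, M a⟫ := fun a b => by rw [← hMsa, real_inner_comm]
  subst hy hz hx'
  simp only [map_add, map_sub, map_smul, inner_add_left, inner_add_right, inner_sub_left,
    inner_sub_right, real_inner_smul_left, real_inner_smul_right, hMsa, hsym]
  -- `field_simp` looks for the normal form `l * 2` of `2 * l`
  have h₂' : 4 - l * 2 - γ * β ≠ 0 := by rwa [mul_comm l]
  field_simp
  ring

end

theorem lyapunov_inequality_general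
    {H : Type*} [NormedAddCommGroup H] [InnerProductSpace ℝ H]
    (M : H →L[ℝ] H)
    (hMsa : ∀ a b : H, ⟪M a, b⟫ = ⟪a, M b⟫)
    (hMpos : ∃ c > (0:ℝ), ∀ a : H, ⟪a, M a⟫ ≥ c * ‖a‖ ^ 2)
    (Minv : H →L[ℝ] H)
    (hMinv₁ : ∀ a : H, Minv (M a) = a)
    (hMinv₂ : ∀ a : H, M (Minv a) = a)
    (β : ℝ) (hβ : 0 < β)
    (A : H → Set H)
    (hAmono : ∀ a b ua vb : H, ua ∈ A a → vb ∈ A b → ⟪ua - vb, a - b⟫ ≥ 0)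
    (C : H → H)
    (hC : ∀ a b : H, ⟪C a - C b, a - b⟫ ≥ (1 / β) * mnorm Minv (C a - C b) ^ 2)
    (ε : ℝ) (hε0 : 0 < ε)
    (ζ γ lam : ℕ → ℝ)
    (hγ : ∀ n, ε ≤ γ n ∧ γ n ≤ (4 - 3 * ε) / β)
    (hlam : ∀ n, ε ≤ lam n ∧ lam n ≤ 2 - γ n * β / 2 - ε / 2)
    (x u v p y z : ℕ → H) (ℓsq : ℕ → ℝ)
    (hy : ∀ n, y n = x n + u n)
    (hz : ∀ n, z n = x n + (((1 - lam n) * γ n * β) / (2 - lam n * γ n * β)) • u n + v n)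
    (hp : ∀ n, M (z n) - M (p n) - γ n • C (y n) ∈ γ n • A (p n))
    (hx : ∀ n, x (n + 1) = x n + lam n • (p n - z n))
    (hℓ : ∀ n, ℓsq n = (lam n * (4 - 2 * lam n - γ n * β) / 2) *
      mnorm M (p n - x n + ((lam n * γ n * β) / (2 - lam n * γ n * β)) • u n
        - ((2 * (1 - lam n)) / (4 - 2 * lam n - γ n * β)) • v n) ^ 2)
    (hdev : ∀ n, (lam (n+1) * γ (n+1) * β / (2 - lam (n+1) * γ (n+1) * β)) * mnorm M (u (n+1)) ^ 2
        + (lam (n+1) * (2 - lam (n+1) * γ (n+1) * β) / (4 - 2 * lam (n+1) - γ (n+1) * β)) * mnorm M (v (n+1)) ^ 2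
        ≤ ζ n * ℓsq n)
    :
    ∀ xs : H, -C xs ∈ A xs → ∀ n : ℕ, 1 ≤ n →
      mnorm M (x (n + 1) - xs) ^ 2 + ℓsq n ≤
        mnorm M (x n - xs) ^ 2 + ζ (n - 1) * ℓsq (n - 1) := by
  intro xs hxs n hn
  obtain ⟨m, rfl⟩ : ∃ m, n = m + 1 := ⟨n - 1, by omega⟩
  have hM : ∀ a : H, 0 ≤ ⟪a, M a⟫ := fun a => by
    obtain ⟨c, hc, hcoer⟩ := hMpos
    exact le_trans (by positivity) (hcoer a)
  have hlam_pos : 0 < lam (m + 1) := hε0.trans_le (hlam (m + 1)).1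
  have hγ_pos : 0 < γ (m + 1) := hε0.trans_le (hγ (m + 1)).1
  obtain ⟨hd₁, hd₂⟩ := stepsize_denominators_pos hε0 hγ_pos hβ (hlam (m + 1)).2
  have hstep := inner_forwardBackward_step_nonneg hMsa hM hMinv₁ hMinv₂ hβ hAmono hC
    hγ_pos.le (hp (m + 1)) hxs
  have hid := forwardBackward_lyapunov_identity hMsa (xs := xs) hd₁.ne' hd₂.ne'
    (hy (m + 1)) (hz (m + 1)) (hx (m + 1))
  have hdev' := hdev m
  rw [Nat.add_sub_cancel, hℓ (m + 1)]
  simp only [mnorm_sq hM] at hdev' ⊢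
  linarith [mul_nonneg (mul_nonneg zero_le_two hlam_pos.le) hstep]

/-- Lyapunov inequality along the iterates. -/
theorem lyapunov_inequality
    {H : Type*} [NormedAddCommGroup H] [InnerProductSpace ℝ H] [CompleteSpace H]
    (M : H →L[ℝ] H)
    (hMsa : ∀ a b : H, ⟪M a, b⟫ = ⟪a, M b⟫)
    (hMpos : ∃ c > (0:ℝ), ∀ a : H, ⟪a, M a⟫ ≥ c * ‖a‖ ^ 2)
    (Minv : H →L[ℝ] H)
    (hMinv₁ : ∀ a : H, Minv (M a) = a)
    (hMinv₂ : ∀ a : H, M (Minv a) = a)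
    (β : ℝ) (hβ : 0 < β)
    (A : H → Set H)
    (hAmono : ∀ a b ua vb : H, ua ∈ A a → vb ∈ A b → ⟪ua - vb, a - b⟫ ≥ 0)
    (hAmax : ∀ a ua : H, (∀ b vb : H, vb ∈ A b → ⟪ua - vb, a - b⟫ ≥ 0) → ua ∈ A a)
    (C : H → H)
    (hC : ∀ a b : H, ⟪C a - C b, a - b⟫ ≥ (1 / β) * mnorm Minv (C a - C b) ^ 2)
    (hzer : ∃ w : H, -C w ∈ A w)
    (ε : ℝ) (hε0 : 0 < ε) (hε1 : ε < min 1 (4 / (3 + β)))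
    (ζ γ lam : ℕ → ℝ)
    (hζ : ∀ n, 0 ≤ ζ n ∧ ζ n ≤ 1 - ε)
    (hγ : ∀ n, ε ≤ γ n ∧ γ n ≤ (4 - 3 * ε) / β)
    (hlam : ∀ n, ε ≤ lam n ∧ lam n ≤ 2 - γ n * β / 2 - ε / 2)
    (x u v p y z : ℕ → H) (ℓsq : ℕ → ℝ)
    (hu0 : u 0 = 0) (hv0 : v 0 = 0)
    (hy : ∀ n, y n = x n + u n)
    (hz : ∀ n, z n = x n + (((1 - lam n) * γ n * β) / (2 - lam n * γ n * β)) • u n + v n)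
    (hp : ∀ n, M (z n) - M (p n) - γ n • C (y n) ∈ γ n • A (p n))
    (hx : ∀ n, x (n + 1) = x n + lam n • (p n - z n))
    (hℓ : ∀ n, ℓsq n = (lam n * (4 - 2 * lam n - γ n * β) / 2) *
      mnorm M (p n - x n + ((lam n * γ n * β) / (2 - lam n * γ n * β)) • u n
        - ((2 * (1 - lam n)) / (4 - 2 * lam n - γ n * β)) • v n) ^ 2)
    (hdev : ∀ n, (lam (n+1) * γ (n+1) * β / (2 - lam (n+1) * γ (n+1) * β)) * mnorm M (u (n+1)) ^ 2
        + (lam (n+1) * (2 - lam (n+1) * γ (n+1) * β) / (4 - 2 * lam (n+1) - γ (n+1) * β)) * mnorm M (v (n+1)) ^ 2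
        ≤ ζ n * ℓsq n)
    :
    ∀ xs : H, -C xs ∈ A xs → ∀ n : ℕ, 1 ≤ n →
      mnorm M (x (n + 1) - xs) ^ 2 + ℓsq n ≤
        mnorm M (x n - xs) ^ 2 + ζ (n - 1) * ℓsq (n - 1) :=
  lyapunov_inequality_general M hMsa hMpos Minv hMinv₁ hMinv₂ β hβ A hAmono C hC ε hε0 ζ γ lam hγ
    hlam x u v p y z ℓsq hy hz hp hx hℓ hdev
end

section
/- For the forward–backward algorithm with deviations, define Δ_n := (Mz_n − Mp_n)/γ_n − (Cy_n − Cp_n). Then p_n − x_n → 0 and Δ_n → 0 strongly in H as n → ∞. -/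
open Filter
open scoped RealInnerProductSpace Pointwise Topology

section FBHelpers
variable {H : Type*} [NormedAddCommGroup H] [InnerProductSpace ℝ H]

lemma msym (M : H →L[ℝ] H) (hMsa : ∀ a b : H, ⟪M a, b⟫ = ⟪a, M b⟫) (a b : H) :
    ⟪a, M b⟫ = ⟪b, M a⟫ := by
  rw [← hMsa, real_inner_comm]

lemma expandQ (M : H →L[ℝ] H) (hMsa : ∀ a b : H, ⟪M a, b⟫ = ⟪a, M b⟫)
    (a b c : ℝ) (P U V : H) :
    ⟪a • P + b • U + c • V, M (a • P + b • U + c • V)⟫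
      = a^2 * ⟪P, M P⟫ + b^2 * ⟪U, M U⟫ + c^2 * ⟪V, M V⟫
        + 2*a*b*⟪P, M U⟫ + 2*a*c*⟪P, M V⟫ + 2*b*c*⟪U, M V⟫ := by
  simp only [map_add, map_smul, inner_add_left, inner_add_right,
    real_inner_smul_left, real_inner_smul_right]
  rw [msym M hMsa U P, msym M hMsa V P, msym M hMsa V U]
  ring

lemma expandIP (M : H →L[ℝ] H) (hMsa : ∀ a b : H, ⟪M a, b⟫ = ⟪a, M b⟫)
    (a b c : ℝ) (P U V : H) :
    ⟪a • P + b • U + c • V, M P⟫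
      = a * ⟪P, M P⟫ + b * ⟪P, M U⟫ + c * ⟪P, M V⟫ := by
  simp only [inner_add_left, real_inner_smul_left]
  rw [msym M hMsa U P, msym M hMsa V P]

lemma csM (M : H →L[ℝ] H) (hMsa : ∀ a b : H, ⟪M a, b⟫ = ⟪a, M b⟫)
    {c : ℝ} (hc : 0 < c) (hQ : ∀ w : H, c * ‖w‖ ^ 2 ≤ ⟪w, M w⟫) (a b : H) :
    ⟪a, M b⟫ ^ 2 ≤ ⟪a, M a⟫ * ⟪b, M b⟫ := by
  by_cases hb : b = 0
  · simp [hb]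
  · have hnb : 0 < ‖b‖ := norm_pos_iff.mpr hb
    have hqb : 0 < ⟪b, M b⟫ := lt_of_lt_of_le (by positivity) (hQ b)
    have key' : (0:ℝ) ≤ ⟪⟪b, M b⟫ • a - ⟪a, M b⟫ • b, M (⟪b, M b⟫ • a - ⟪a, M b⟫ • b)⟫ := by
      refine le_trans ?_ (hQ _)
      positivity
    have hexp : ⟪⟪b, M b⟫ • a - ⟪a, M b⟫ • b, M (⟪b, M b⟫ • a - ⟪a, M b⟫ • b)⟫
        = ⟪b, M b⟫^2 * ⟪a, M a⟫ - 2 * ⟪b, M b⟫ * ⟪a, M b⟫^2 + ⟪a, M b⟫^2 * ⟪b, M b⟫ := by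
      simp only [map_sub, map_smul, inner_sub_left, inner_sub_right,
        real_inner_smul_left, real_inner_smul_right]
      rw [msym M hMsa b a]
      ring
    rw [hexp] at key'
    nlinarith [key', hqb]

lemma young_ineq {s A B b : ℝ} (hb : 0 < b) (hA : 0 ≤ A) (hB : 0 ≤ B)
    (h : s ^ 2 ≤ A * B) : b * s ≤ A + (b ^ 2 / 4) * B := by
  nlinarith [sq_nonneg (A - b ^ 2 / 4 * B), mul_nonneg hA hB,
    mul_le_mul_of_nonneg_left h (sq_nonneg b),
    mul_nonneg (mul_nonneg hb.le hb.le) hB, mul_nonneg hb.le hA]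

lemma div_squeeze {f g : ℕ → ℝ} {cp : ℝ} (hc : 0 < cp)
    (h0 : ∀ n, 0 ≤ f n) (hle : ∀ n, cp * f n ≤ g n)
    (hg : Tendsto g atTop (𝓝 0)) : Tendsto f atTop (𝓝 0) := by
  have h1 : Tendsto (fun n => cp * f n) atTop (𝓝 0) :=
    squeeze_zero (fun n => mul_nonneg hc.le (h0 n)) hle hg
  have h2 := h1.const_mul cp⁻¹
  simp only [mul_zero] at h2
  convert h2 using 2 with n
  field_simp

lemma smul_tendsto {k : ℕ → ℝ} {K : ℝ} (hk : ∀ n, |k n| ≤ K) {w : ℕ → H}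
    (hw : Tendsto w atTop (𝓝 0)) : Tendsto (fun n => k n • w n) atTop (𝓝 0) := by
  rw [tendsto_zero_iff_norm_tendsto_zero] at hw ⊢
  refine squeeze_zero (fun n => norm_nonneg _) (fun n => ?_) (by simpa using hw.const_mul K)
  rw [norm_smul, Real.norm_eq_abs]
  exact mul_le_mul_of_nonneg_right (hk n) (norm_nonneg _)

lemma tendQ (M : H →L[ℝ] H) {c : ℝ} (hc : 0 < c) (hQ : ∀ w : H, c * ‖w‖ ^ 2 ≤ ⟪w, M w⟫)
    {w : ℕ → H} (h : Tendsto (fun n => ⟪w n, M (w n)⟫) atTop (𝓝 0)) :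
    Tendsto w atTop (𝓝 0) := by
  rw [tendsto_zero_iff_norm_tendsto_zero]
  have h2 : Tendsto (fun n => ‖w n‖ ^ 2) atTop (𝓝 0) :=
    div_squeeze hc (fun n => sq_nonneg _) (fun n => hQ (w n)) h
  have h3 := (Real.continuous_sqrt.tendsto' 0 0 Real.sqrt_zero).comp h2
  convert h3 using 2 with n
  simp [Function.comp, Real.sqrt_sq (norm_nonneg _)]

end FBHelpers

set_option maxHeartbeats 1000000 in
lemma central_identity (l g b qP qU qV pu pv uv : ℝ)
    (h1ne' : (2 - l * g * b) ≠ 0) (h2ne' : (4 - 2 * l - g * b) ≠ 0) :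
        2 * l * (g * b / 4 * ((-1:ℝ)^2 * qP
              + 1^2 * qU + (0:ℝ)^2 * qV
              + 2*(-1)*1*pu + 2*(-1)*0*pv
              + 2*1*0*uv))
          - 2 * l * (1 * qP
              + (-((1 - l) * g * b / (2 - l * g * b))) * pu
              + (-1) * pv)
          + l^2 * ((1:ℝ)^2 * qP
              + (-((1 - l) * g * b / (2 - l * g * b)))^2 * qU
              + (-1:ℝ)^2 * qV
              + 2*1*(-((1 - l) * g * b / (2 - l * g * b))) * pu
              + 2*1*(-1) * pv
              + 2*(-((1 - l) * g * b / (2 - l * g * b)))*(-1) * uv)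
          + l * (4 - 2 * l - g * b) / 2
            * ((1:ℝ)^2 * qP
              + (l * g * b / (2 - l * g * b))^2 * qU
              + (-(2 * (1 - l) / (4 - 2 * l - g * b)))^2 * qV
              + 2*1*(l * g * b / (2 - l * g * b)) * pu
              + 2*1*(-(2 * (1 - l) / (4 - 2 * l - g * b))) * pv
              + 2*(l * g * b / (2 - l * g * b))
                  *(-(2 * (1 - l) / (4 - 2 * l - g * b))) * uv)
          - l * g * b / (2 - l * g * b) * qU
          - l * (2 - l * g * b) / (4 - 2 * l - g * b) * qV
        = 0 := by
  field_simp
  ring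


set_option maxHeartbeats 2000000 in
/-- p_n − x_n → 0 and Δ_n → 0 strongly. -/
theorem residual_vanishes
    {H : Type*} [NormedAddCommGroup H] [InnerProductSpace ℝ H] [CompleteSpace H]
    (M : H →L[ℝ] H)
    (hMsa : ∀ a b : H, ⟪M a, b⟫ = ⟪a, M b⟫)
    (hMpos : ∃ c > (0:ℝ), ∀ a : H, ⟪a, M a⟫ ≥ c * ‖a‖ ^ 2)
    (Minv : H →L[ℝ] H)
    (hMinv₁ : ∀ a : H, Minv (M a) = a)
    (hMinv₂ : ∀ a : H, M (Minv a) = a)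
    (β : ℝ) (hβ : 0 < β)
    (A : H → Set H)
    (hAmono : ∀ a b ua vb : H, ua ∈ A a → vb ∈ A b → ⟪ua - vb, a - b⟫ ≥ 0)
    (hAmax : ∀ a ua : H, (∀ b vb : H, vb ∈ A b → ⟪ua - vb, a - b⟫ ≥ 0) → ua ∈ A a)
    (C : H → H)
    (hC : ∀ a b : H, ⟪C a - C b, a - b⟫ ≥ (1 / β) * mnorm Minv (C a - C b) ^ 2)
    (hzer : ∃ w : H, -C w ∈ A w)
    (ε : ℝ) (hε0 : 0 < ε) (hε1 : ε < min 1 (4 / (3 + β)))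
    (ζ γ lam : ℕ → ℝ)
    (hζ : ∀ n, 0 ≤ ζ n ∧ ζ n ≤ 1 - ε)
    (hγ : ∀ n, ε ≤ γ n ∧ γ n ≤ (4 - 3 * ε) / β)
    (hlam : ∀ n, ε ≤ lam n ∧ lam n ≤ 2 - γ n * β / 2 - ε / 2)
    (x u v p y z : ℕ → H) (ℓsq : ℕ → ℝ)
    (hu0 : u 0 = 0) (hv0 : v 0 = 0)
    (hy : ∀ n, y n = x n + u n)
    (hz : ∀ n, z n = x n + (((1 - lam n) * γ n * β) / (2 - lam n * γ n * β)) • u n + v n)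
    (hp : ∀ n, M (z n) - M (p n) - γ n • C (y n) ∈ γ n • A (p n))
    (hx : ∀ n, x (n + 1) = x n + lam n • (p n - z n))
    (hℓ : ∀ n, ℓsq n = (lam n * (4 - 2 * lam n - γ n * β) / 2) *
      mnorm M (p n - x n + ((lam n * γ n * β) / (2 - lam n * γ n * β)) • u n
        - ((2 * (1 - lam n)) / (4 - 2 * lam n - γ n * β)) • v n) ^ 2)
    (hdev : ∀ n, (lam (n+1) * γ (n+1) * β / (2 - lam (n+1) * γ (n+1) * β)) * mnorm M (u (n+1)) ^ 2
        + (lam (n+1) * (2 - lam (n+1) * γ (n+1) * β) / (4 - 2 * lam (n+1) - γ (n+1) * β)) * mnorm M (v (n+1)) ^ 2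
        ≤ ζ n * ℓsq n)
    :
    Tendsto (fun n => p n - x n) atTop (𝓝 0) ∧
      Tendsto (fun n => (γ n)⁻¹ • (M (z n) - M (p n)) - (C (y n) - C (p n))) atTop (𝓝 0) := by
  classical
  obtain ⟨c, hc, hQc⟩ := hMpos
  have hQ : ∀ w : H, c * ‖w‖ ^ 2 ≤ ⟪w, M w⟫ := fun w => hQc w
  have hQ0 : ∀ w : H, 0 ≤ ⟪w, M w⟫ := fun w => le_trans (by positivity) (hQ w)
  have hmn : ∀ w : H, mnorm M w ^ 2 = ⟪w, M w⟫ := fun w => Real.sq_sqrt (hQ0 w)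
  have hQi0 : ∀ d : H, 0 ≤ ⟪d, Minv d⟫ := by
    intro d
    have h1 : ⟪Minv d, M (Minv d)⟫ = ⟪d, Minv d⟫ := by
      rw [hMinv₂]; exact real_inner_comm _ _
    rw [← h1]; exact hQ0 _
  have hmni : ∀ d : H, mnorm Minv d ^ 2 = ⟪d, Minv d⟫ := fun d => Real.sq_sqrt (hQi0 d)
  obtain ⟨xs, hxs⟩ := hzer
  -- parameter bounds
  have hε1' : ε < 1 := lt_of_lt_of_le hε1 (min_le_left _ _)
  have hγ0 : ∀ n, 0 < γ n := fun n => lt_of_lt_of_le hε0 (hγ n).1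
  have ht0 : ∀ n, ε * β ≤ γ n * β := fun n => mul_le_mul_of_nonneg_right (hγ n).1 hβ.le
  have htp : ∀ n, 0 < γ n * β := fun n => mul_pos (hγ0 n) hβ
  have htu : ∀ n, γ n * β ≤ 4 - 3 * ε := fun n => (le_div_iff₀ hβ).mp (hγ n).2
  have hl0 : ∀ n, 0 < lam n := fun n => lt_of_lt_of_le hε0 (hlam n).1
  have hd2 : ∀ n, ε ≤ 4 - 2 * lam n - γ n * β := fun n => by linarith [(hlam n).2]
  have hd2p : ∀ n, 0 < 4 - 2 * lam n - γ n * β := fun n => lt_of_lt_of_le hε0 (hd2 n)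
  have hd1 : ∀ n, ε ^ 2 * β / 2 ≤ 2 - lam n * γ n * β := by
    intro n
    nlinarith [sq_nonneg (γ n * β - 2), (hlam n).2, ht0 n, htp n, hε0,
      mul_nonneg (sub_nonneg.mpr (hlam n).2) (htp n).le,
      mul_nonneg hε0.le (sub_nonneg.mpr (ht0 n))]
  have hd1p : ∀ n, 0 < 2 - lam n * γ n * β := fun n =>
    lt_of_lt_of_le (by positivity) (hd1 n)
  have hlam2 : ∀ n, lam n ≤ 2 := fun n => by have := (hlam n).2; have := htp n; linarith
  have h1ne : ∀ n, (2 - lam n * γ n * β) ≠ 0 := fun n => (hd1p n).ne'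
  have h2ne : ∀ n, (4 - 2 * lam n - γ n * β) ≠ 0 := fun n => (hd2p n).ne'
  -- master inequality
  have master : ∀ n,
      ⟪x (n+1) - xs, M (x (n+1) - xs)⟫ + ℓsq n
        ≤ ⟪x n - xs, M (x n - xs)⟫
          + lam n * γ n * β / (2 - lam n * γ n * β) * ⟪u n, M (u n)⟫
          + lam n * (2 - lam n * γ n * β) / (4 - 2 * lam n - γ n * β) * ⟪v n, M (v n)⟫ := by
    intro n
    -- monotonicity of A
    obtain ⟨wn, hwn, hwe⟩ := Set.mem_smul_set.mp (hp n)
    have hmono0 : (0:ℝ) ≤ ⟪wn - -C xs, p n - xs⟫ := hAmono (p n) xs wn (-C xs) hwn hxs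
    have e1 : γ n • (wn - -C xs) = M (z n) - M (p n) - γ n • (C (y n) - C xs) := by
      rw [smul_sub, hwe]; module
    have e2 : γ n * ⟪wn - -C xs, p n - xs⟫
        = ⟪M (z n) - M (p n), p n - xs⟫ - γ n * ⟪C (y n) - C xs, p n - xs⟫ := by
      rw [← real_inner_smul_left, e1, inner_sub_left, real_inner_smul_left]
    have F1 : γ n * ⟪C (y n) - C xs, p n - xs⟫ ≤ ⟪M (z n) - M (p n), p n - xs⟫ := by
      linarith [mul_nonneg (hγ0 n).le hmono0, e2]
    -- cocoercivity of C
    have hco := hC (y n) xs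
    rw [hmni] at hco
    have F2 : ⟪C (y n) - C xs, Minv (C (y n) - C xs)⟫ ≤ β * ⟪C (y n) - C xs, y n - xs⟫ := by
      have h := mul_le_mul_of_nonneg_left hco hβ.le
      rwa [one_div, ← mul_assoc, mul_inv_cancel₀ hβ.ne', one_mul] at h
    have F3 : β * ⟪C (y n) - C xs, y n - xs⟫
        = β * ⟪C (y n) - C xs, y n - p n⟫ + β * ⟪C (y n) - C xs, p n - xs⟫ := by
      rw [show y n - xs = (y n - p n) + (p n - xs) from by module, inner_add_right]
      ring
    -- mixed Cauchy-Schwarz and Young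
    have hgd : ⟪C (y n) - C xs, y n - p n⟫ = ⟪Minv (C (y n) - C xs), M (y n - p n)⟫ := by
      have h := hMsa (Minv (C (y n) - C xs)) (y n - p n)
      rw [hMinv₂] at h
      exact h
    have hcs := csM M hMsa hc hQ (Minv (C (y n) - C xs)) (y n - p n)
    have hQe : ⟪Minv (C (y n) - C xs), M (Minv (C (y n) - C xs))⟫
        = ⟪C (y n) - C xs, Minv (C (y n) - C xs)⟫ := by
      rw [hMinv₂]; exact real_inner_comm _ _
    rw [hQe, ← hgd] at hcs
    have F4 : β * ⟪C (y n) - C xs, y n - p n⟫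
        ≤ ⟪C (y n) - C xs, Minv (C (y n) - C xs)⟫
          + (β ^ 2 / 4) * ⟪y n - p n, M (y n - p n)⟫ :=
      young_ineq hβ (hQi0 _) (hQ0 _) hcs
    have key3 : -(γ n * β / 4) * ⟪y n - p n, M (y n - p n)⟫
        ≤ ⟪M (z n) - M (p n), p n - xs⟫ := by
      have h0 : (0:ℝ) ≤ β * ⟪C (y n) - C xs, p n - xs⟫
          + β ^ 2 / 4 * ⟪y n - p n, M (y n - p n)⟫ := by linarith [F2, F3, F4]
      nlinarith [mul_nonneg (hγ0 n).le h0, mul_le_mul_of_nonneg_left F1 hβ.le, hβ,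
        hQ0 (y n - p n), hγ0 n]
    -- switch to p - z form
    have e3 : ⟪p n - z n, M (p n - xs)⟫ = -⟪M (z n) - M (p n), p n - xs⟫ := by
      have h := hMsa (z n - p n) (p n - xs)
      rw [map_sub] at h
      rw [show z n - p n = -(p n - z n) from by module, inner_neg_left] at h
      linarith [h]
    have key4 : 2 * lam n * ⟪p n - z n, M (p n - xs)⟫
        ≤ 2 * lam n * (γ n * β / 4 * ⟪y n - p n, M (y n - p n)⟫) := by
      rw [e3]
      apply mul_le_mul_of_nonneg_left _ (by linarith [hl0 n] : (0:ℝ) ≤ 2 * lam n)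
      linarith [key3]
    -- expansions
    have epz : p n - z n = (1:ℝ) • (p n - x n)
        + (-((1 - lam n) * γ n * β / (2 - lam n * γ n * β))) • u n + (-1:ℝ) • v n := by
      rw [hz n]; module
    have eq3 := expandQ M hMsa 1 (-((1 - lam n) * γ n * β / (2 - lam n * γ n * β))) (-1)
      (p n - x n) (u n) (v n)
    rw [← epz] at eq3
    have eq4 := expandIP M hMsa 1 (-((1 - lam n) * γ n * β / (2 - lam n * γ n * β))) (-1)
      (p n - x n) (u n) (v n)
    rw [← epz] at eq4
    have eyp : y n - p n = (-1:ℝ) • (p n - x n) + (1:ℝ) • u n + (0:ℝ) • v n := by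
      rw [hy n]; module
    have eq5 := expandQ M hMsa (-1) 1 0 (p n - x n) (u n) (v n)
    rw [← eyp] at eq5
    rw [eq5] at key4
    have eR : p n - x n + (lam n * γ n * β / (2 - lam n * γ n * β)) • u n
        - (2 * (1 - lam n) / (4 - 2 * lam n - γ n * β)) • v n
        = (1:ℝ) • (p n - x n) + (lam n * γ n * β / (2 - lam n * γ n * β)) • u n
          + (-(2 * (1 - lam n) / (4 - 2 * lam n - γ n * β))) • v n := by module
    have eq6 := expandQ M hMsa 1 (lam n * γ n * β / (2 - lam n * γ n * β))
      (-(2 * (1 - lam n) / (4 - 2 * lam n - γ n * β))) (p n - x n) (u n) (v n)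
    rw [← eR] at eq6
    have hℓn : ℓsq n = lam n * (4 - 2 * lam n - γ n * β) / 2
        * ⟪p n - x n + (lam n * γ n * β / (2 - lam n * γ n * β)) • u n
            - (2 * (1 - lam n) / (4 - 2 * lam n - γ n * β)) • v n,
          M (p n - x n + (lam n * γ n * β / (2 - lam n * γ n * β)) • u n
            - (2 * (1 - lam n) / (4 - 2 * lam n - γ n * β)) • v n)⟫ := by
      rw [hℓ n, hmn]
    have ex1 : x (n+1) - xs = (1:ℝ) • (x n - xs) + lam n • (p n - z n) + (0:ℝ) • (0:H) := by
      rw [hx n]; module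
    have eq1 := expandQ M hMsa 1 (lam n) 0 (x n - xs) (p n - z n) (0:H)
    rw [← ex1] at eq1
    have ecross : ⟪x n - xs, M (p n - z n)⟫
        = ⟪p n - z n, M (p n - xs)⟫ - ⟪p n - z n, M (p n - x n)⟫ := by
      rw [msym M hMsa (x n - xs) (p n - z n),
        show x n - xs = (p n - xs) - (p n - x n) from by module, map_sub, inner_sub_right]
    -- the central algebraic identity
    have h1ne' := h1ne n
    have h2ne' := h2ne n
    have hident := central_identity (lam n) (γ n) β
      ⟪p n - x n, M (p n - x n)⟫ ⟪u n, M (u n)⟫ ⟪v n, M (v n)⟫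
      ⟪p n - x n, M (u n)⟫ ⟪p n - x n, M (v n)⟫ ⟪u n, M (v n)⟫ h1ne' h2ne'
    rw [eq1, ecross, hℓn, eq6, eq3, eq4]
    linarith [key4, hident]
  -- Lyapunov sequence
  set S : ℕ → ℝ := fun n => ⟪x n - xs, M (x n - xs)⟫
    + lam n * γ n * β / (2 - lam n * γ n * β) * ⟪u n, M (u n)⟫
    + lam n * (2 - lam n * γ n * β) / (4 - 2 * lam n - γ n * β) * ⟪v n, M (v n)⟫ with hSdef
  have hku : ∀ n, 0 ≤ lam n * γ n * β / (2 - lam n * γ n * β) := fun n =>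
    div_nonneg (mul_nonneg (mul_nonneg (hl0 n).le (hγ0 n).le) hβ.le) (hd1p n).le
  have hkv : ∀ n, 0 ≤ lam n * (2 - lam n * γ n * β) / (4 - 2 * lam n - γ n * β) := fun n =>
    div_nonneg (mul_nonneg (hl0 n).le (hd1p n).le) (hd2p n).le
  have hℓ0 : ∀ n, 0 ≤ ℓsq n := fun n => by
    rw [hℓ n]
    exact mul_nonneg (div_nonneg (mul_nonneg (hl0 n).le (hd2p n).le) (by norm_num))
      (sq_nonneg _)
  have hS0 : ∀ n, 0 ≤ S n := fun n => by
    simp only [hSdef]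
    have h1 := hQ0 (x n - xs)
    have h2 := mul_nonneg (hku n) (hQ0 (u n))
    have h3 := mul_nonneg (hkv n) (hQ0 (v n))
    linarith
  have hstep : ∀ n, S (n+1) + ε * ℓsq n ≤ S n := by
    intro n
    have hm := master n
    have hd := hdev n
    rw [hmn, hmn] at hd
    have hζ2 : ζ n * ℓsq n ≤ (1 - ε) * ℓsq n := mul_le_mul_of_nonneg_right (hζ n).2 (hℓ0 n)
    simp only [hSdef]
    linarith [hm, hd, hζ2]
  have hsum : ∀ n, (Finset.range n).sum (fun k => ε * ℓsq k) + S n ≤ S 0 := by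
    intro n
    induction n with
    | zero => simp
    | succ m ih =>
      rw [Finset.sum_range_succ]
      have := hstep m
      linarith
  have hsummable : Summable (fun n => ε * ℓsq n) := by
    apply summable_of_sum_range_le (c := S 0) (fun n => mul_nonneg hε0.le (hℓ0 n))
    intro n
    have h1 := hsum n
    have h2 := hS0 n
    linarith
  have hℓtend : Tendsto ℓsq atTop (𝓝 0) :=
    div_squeeze hε0 hℓ0 (fun n => le_refl _) hsummable.tendsto_atTop_zero
  -- coefficient lower bounds
  have hWu : ∀ n, ε^2*β/2 ≤ lam n * γ n * β / (2 - lam n * γ n * β) := by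
    intro n
    rw [le_div_iff₀ (hd1p n)]
    nlinarith [mul_le_mul (hlam n).1 (ht0 n) (by positivity) (hl0 n).le,
      mul_nonneg (mul_nonneg (mul_nonneg (hl0 n).le (hγ0 n).le) hβ.le)
        (show (0:ℝ) ≤ ε^2*β/2 by positivity)]
  have hWv : ∀ n, ε^3*β/8 ≤ lam n * (2 - lam n * γ n * β) / (4 - 2 * lam n - γ n * β) := by
    intro n
    rw [le_div_iff₀ (hd2p n)]
    nlinarith [mul_le_mul (hlam n).1 (hd1 n) (by positivity) (hl0 n).le,
      mul_nonneg (show (0:ℝ) ≤ ε^3*β/8 by positivity) (hl0 n).le,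
      mul_nonneg (show (0:ℝ) ≤ ε^3*β/8 by positivity) (htp n).le]
  have hWl : ∀ n, ε^2/2 ≤ lam n * (4 - 2 * lam n - γ n * β) / 2 := by
    intro n
    nlinarith [mul_le_mul (hlam n).1 (hd2 n) hε0.le (hl0 n).le]
  -- u, v tend to zero
  have hQu : Tendsto (fun n => ⟪u n, M (u n)⟫) atTop (𝓝 0) := by
    rw [← tendsto_add_atTop_iff_nat 1]
    refine div_squeeze (show (0:ℝ) < ε^2*β/2 by positivity) (fun n => hQ0 _)
      (fun n => ?_) hℓtend
    have hd := hdev n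
    rw [hmn, hmn] at hd
    have h1 := mul_le_mul_of_nonneg_right (hWu (n+1)) (hQ0 (u (n+1)))
    have h2 := mul_nonneg (hkv (n+1)) (hQ0 (v (n+1)))
    have hζ2 : ζ n * ℓsq n ≤ ℓsq n := by
      have h := mul_le_mul_of_nonneg_right ((hζ n).2.trans (by linarith : (1:ℝ) - ε ≤ 1)) (hℓ0 n)
      simpa using h
    linarith [h1, h2, hd, hζ2]
  have hQv : Tendsto (fun n => ⟪v n, M (v n)⟫) atTop (𝓝 0) := by
    rw [← tendsto_add_atTop_iff_nat 1]
    refine div_squeeze (show (0:ℝ) < ε^3*β/8 by positivity) (fun n => hQ0 _)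
      (fun n => ?_) hℓtend
    have hd := hdev n
    rw [hmn, hmn] at hd
    have h1 := mul_le_mul_of_nonneg_right (hWv (n+1)) (hQ0 (v (n+1)))
    have h2 := mul_nonneg (hku (n+1)) (hQ0 (u (n+1)))
    have hζ2 : ζ n * ℓsq n ≤ ℓsq n := by
      have h := mul_le_mul_of_nonneg_right ((hζ n).2.trans (by linarith : (1:ℝ) - ε ≤ 1)) (hℓ0 n)
      simpa using h
    linarith [h1, h2, hd, hζ2]
  have hQR : Tendsto (fun n => ⟪p n - x n + (lam n * γ n * β / (2 - lam n * γ n * β)) • u n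
      - (2 * (1 - lam n) / (4 - 2 * lam n - γ n * β)) • v n,
      M (p n - x n + (lam n * γ n * β / (2 - lam n * γ n * β)) • u n
      - (2 * (1 - lam n) / (4 - 2 * lam n - γ n * β)) • v n)⟫) atTop (𝓝 0) := by
    refine div_squeeze (show (0:ℝ) < ε^2/2 by positivity) (fun n => hQ0 _)
      (fun n => ?_) hℓtend
    have h := hℓ n
    rw [hmn] at h
    have h1 := mul_le_mul_of_nonneg_right (hWl n) (hQ0 (p n - x n
      + (lam n * γ n * β / (2 - lam n * γ n * β)) • u n
      - (2 * (1 - lam n) / (4 - 2 * lam n - γ n * β)) • v n))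
    linarith [h1, h.le, h.ge]
  have hu : Tendsto u atTop (𝓝 (0:H)) := tendQ M hc hQ hQu
  have hv : Tendsto v atTop (𝓝 (0:H)) := tendQ M hc hQ hQv
  have hRv := tendQ M hc hQ hQR
  -- scalar coefficient absolute bounds
  have hkkb : ∀ n, |lam n * γ n * β / (2 - lam n * γ n * β)| ≤ 4/(ε^2*β) := by
    intro n
    rw [abs_div, abs_of_pos (hd1p n),
      abs_of_pos (mul_pos (mul_pos (hl0 n) (hγ0 n)) hβ),
      div_le_div_iff₀ (hd1p n) (show (0:ℝ) < ε^2*β by positivity)]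
    nlinarith [mul_nonneg (hd1p n).le (show (0:ℝ) ≤ ε^2*β by positivity), hd1 n]
  have hmmb : ∀ n, |2 * (1 - lam n) / (4 - 2 * lam n - γ n * β)| ≤ 2/ε := by
    intro n
    rw [abs_div, abs_of_pos (hd2p n), div_le_div_iff₀ (hd2p n) hε0]
    have habs : |2 * (1 - lam n)| ≤ 2 := by
      rw [abs_le]
      constructor
      · linarith [hlam2 n]
      · linarith [hl0 n]
    nlinarith [habs, hd2 n, mul_nonneg (sub_nonneg.mpr habs) hε0.le]
  have haab : ∀ n, |(1 - lam n) * γ n * β / (2 - lam n * γ n * β)| ≤ 8/(ε^2*β) := by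
    intro n
    rw [abs_div, abs_of_pos (hd1p n),
      div_le_div_iff₀ (hd1p n) (show (0:ℝ) < ε^2*β by positivity)]
    have habs : |(1 - lam n) * γ n * β| ≤ 4 := by
      rw [abs_mul, abs_mul, abs_of_pos (hγ0 n), abs_of_pos hβ]
      have h1l : |1 - lam n| ≤ 1 := by
        rw [abs_le]
        constructor
        · linarith [hlam2 n]
        · linarith [hl0 n]
      nlinarith [htu n, htp n, hε0,
        mul_le_mul_of_nonneg_right h1l (mul_pos (hγ0 n) hβ).le]
    nlinarith [habs, hd1 n,
      mul_nonneg (sub_nonneg.mpr habs) (show (0:ℝ) ≤ ε^2*β by positivity)]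
  -- p - x tends to zero
  have hPx : Tendsto (fun n => p n - x n) atTop (𝓝 0) := by
    have h1 := smul_tendsto (k := fun n => lam n * γ n * β / (2 - lam n * γ n * β)) hkkb hu
    have h2 := smul_tendsto (k := fun n => 2 * (1 - lam n) / (4 - 2 * lam n - γ n * β)) hmmb hv
    have h3 : Tendsto (fun n => (p n - x n + (lam n * γ n * β / (2 - lam n * γ n * β)) • u n
        - (2 * (1 - lam n) / (4 - 2 * lam n - γ n * β)) • v n)
        - (lam n * γ n * β / (2 - lam n * γ n * β)) • u n
        + (2 * (1 - lam n) / (4 - 2 * lam n - γ n * β)) • v n) atTop (𝓝 0) := by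
      simpa using (hRv.sub h1).add h2
    have he : (fun n => (p n - x n + (lam n * γ n * β / (2 - lam n * γ n * β)) • u n
        - (2 * (1 - lam n) / (4 - 2 * lam n - γ n * β)) • v n)
        - (lam n * γ n * β / (2 - lam n * γ n * β)) • u n
        + (2 * (1 - lam n) / (4 - 2 * lam n - γ n * β)) • v n)
        = (fun n => p n - x n) := by
      funext n
      module
    rwa [he] at h3
  have hzp : Tendsto (fun n => z n - p n) atTop (𝓝 0) := by
    have h1 := smul_tendsto (k := fun n => (1 - lam n) * γ n * β / (2 - lam n * γ n * β)) haab hu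
    have h2 : Tendsto (fun n => ((1 - lam n) * γ n * β / (2 - lam n * γ n * β)) • u n + v n
        - (p n - x n)) atTop (𝓝 0) := by
      simpa using (h1.add hv).sub hPx
    have he : (fun n => ((1 - lam n) * γ n * β / (2 - lam n * γ n * β)) • u n + v n
        - (p n - x n)) = (fun n => z n - p n) := by
      funext n
      rw [hz n]
      module
    rwa [he] at h2
  have hyp2 : Tendsto (fun n => y n - p n) atTop (𝓝 0) := by
    have h2 : Tendsto (fun n => u n - (p n - x n)) atTop (𝓝 0) := by
      simpa using hu.sub hPx
    have he : (fun n => u n - (p n - x n)) = (fun n => y n - p n) := by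
      funext n
      rw [hy n]
      module
    rwa [he] at h2
  -- Lipschitz continuity of C
  have hLip : ∀ a b : H, ‖C a - C b‖ ≤ β * (‖M‖^2 + 1) / c * ‖a - b‖ := by
    intro a b
    by_cases hg0 : C a - C b = 0
    · rw [hg0]
      simp only [norm_zero]
      exact mul_nonneg (div_nonneg (by positivity) hc.le) (norm_nonneg _)
    · have hgn : 0 < ‖C a - C b‖ := norm_pos_iff.mpr hg0
      have h1 := hC a b
      rw [hmni] at h1
      have h1' : ⟪C a - C b, Minv (C a - C b)⟫ ≤ β * ⟪C a - C b, a - b⟫ := by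
        have h := mul_le_mul_of_nonneg_left h1 hβ.le
        rwa [one_div, ← mul_assoc, mul_inv_cancel₀ hβ.ne', one_mul] at h
      have h2 : ⟪C a - C b, a - b⟫ ≤ ‖C a - C b‖ * ‖a - b‖ := real_inner_le_norm _ _
      have he : M (Minv (C a - C b)) = C a - C b := hMinv₂ _
      have h3 : ‖C a - C b‖ ≤ ‖M‖ * ‖Minv (C a - C b)‖ := by
        conv_lhs => rw [← he]
        exact M.le_opNorm _
      have h4 : c * ‖Minv (C a - C b)‖^2 ≤ ⟪C a - C b, Minv (C a - C b)⟫ := by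
        have h := hQ (Minv (C a - C b))
        rwa [show ⟪Minv (C a - C b), M (Minv (C a - C b))⟫
            = ⟪C a - C b, Minv (C a - C b)⟫ from by rw [he]; exact real_inner_comm _ _] at h
      have h5 : c * ‖C a - C b‖^2 ≤ (‖M‖^2 + 1) * ⟪C a - C b, Minv (C a - C b)⟫ := by
        nlinarith [mul_self_le_mul_self (norm_nonneg (C a - C b)) h3,
          mul_le_mul_of_nonneg_left h4 (sq_nonneg ‖M‖),
          hQi0 (C a - C b), hc.le]
      have h6 : ⟪C a - C b, Minv (C a - C b)⟫ ≤ β * (‖C a - C b‖ * ‖a - b‖) :=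
        le_trans h1' (mul_le_mul_of_nonneg_left h2 hβ.le)
      rw [div_mul_eq_mul_div, le_div_iff₀ hc]
      nlinarith [h5, mul_le_mul_of_nonneg_left h6 (show (0:ℝ) ≤ ‖M‖^2 + 1 by positivity),
        hgn, mul_pos hβ hgn, norm_nonneg (a - b)]
  refine ⟨hPx, ?_⟩
  rw [tendsto_zero_iff_norm_tendsto_zero]
  have hg0 : Tendsto (fun n => ε⁻¹ * ‖M‖ * ‖z n - p n‖
      + (β * (‖M‖^2 + 1) / c) * ‖y n - p n‖) atTop (𝓝 0) := by
    rw [tendsto_zero_iff_norm_tendsto_zero] at hzp hyp2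
    have h := (hzp.const_mul (ε⁻¹ * ‖M‖)).add (hyp2.const_mul (β * (‖M‖^2 + 1) / c))
    simpa using h
  refine squeeze_zero (fun n => norm_nonneg _) (fun n => ?_) hg0
  have hb1 : ‖(γ n)⁻¹ • (M (z n) - M (p n))‖ ≤ ε⁻¹ * ‖M‖ * ‖z n - p n‖ := by
    rw [← map_sub, norm_smul]
    have h1 : ‖M (z n - p n)‖ ≤ ‖M‖ * ‖z n - p n‖ := M.le_opNorm _
    have h2 : ‖(γ n)⁻¹‖ ≤ ε⁻¹ := by
      rw [Real.norm_eq_abs, abs_of_pos (inv_pos.mpr (hγ0 n))]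
      exact inv_anti₀ hε0 (hγ n).1
    calc ‖(γ n)⁻¹‖ * ‖M (z n - p n)‖
        ≤ ε⁻¹ * (‖M‖ * ‖z n - p n‖) :=
          mul_le_mul h2 h1 (norm_nonneg _) (by positivity)
      _ = ε⁻¹ * ‖M‖ * ‖z n - p n‖ := by ring
  have hb2 := hLip (y n) (p n)
  calc ‖(γ n)⁻¹ • (M (z n) - M (p n)) - (C (y n) - C (p n))‖
      ≤ ‖(γ n)⁻¹ • (M (z n) - M (p n))‖ + ‖C (y n) - C (p n)‖ := norm_sub_le _ _
    _ ≤ ε⁻¹ * ‖M‖ * ‖z n - p n‖ + β * (‖M‖^2 + 1) / c * ‖y n - p n‖ := add_le_add hb1 hb2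
end

section
/- Let (𝔞_n), (𝔟_n), (𝔠_n) be bounded sequences of real numbers. Then there exist constants c₁, c₂ > 0 (independent of n) such that, for the forward–backward algorithm with deviations and all n ≥ 1, ‖𝔞_n(p_n − x_n) + 𝔟_n u_n + 𝔠_n v_n‖_M² ≤ c₁·ℓ_n² + c₂·ℓ_{n−1}². -/
open Filter
open scoped RealInnerProductSpace Pointwise Topology

section
variable {H : Type*} [NormedAddCommGroup H] [InnerProductSpace ℝ H]

lemma aux_smul_q (M : H →L[ℝ] H) (s : ℝ) (w : H) :
    ⟪s • w, M (s • w)⟫ = s ^ 2 * ⟪w, M w⟫ := by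
  simp [map_smul, real_inner_smul_left, real_inner_smul_right]; ring

lemma aux_three (M : H →L[ℝ] H) (hMsa : ∀ a b : H, ⟪M a, b⟫ = ⟪a, M b⟫)
    (hQ : ∀ w : H, 0 ≤ ⟪w, M w⟫) (x y z : H) :
    ⟪x + y + z, M (x + y + z)⟫ ≤ 3 * (⟪x, M x⟫ + ⟪y, M y⟫ + ⟪z, M z⟫) := by
  have hs : ∀ a b : H, ⟪b, M a⟫ = ⟪a, M b⟫ := fun a b => by
    rw [real_inner_comm, hMsa]
  have e1 : ⟪x - y, M (x - y)⟫ = ⟪x, M x⟫ - 2 * ⟪x, M y⟫ + ⟪y, M y⟫ := by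
    simp only [map_sub, inner_sub_left, inner_sub_right, hs x y]; ring
  have e2 : ⟪x - z, M (x - z)⟫ = ⟪x, M x⟫ - 2 * ⟪x, M z⟫ + ⟪z, M z⟫ := by
    simp only [map_sub, inner_sub_left, inner_sub_right, hs x z]; ring
  have e3 : ⟪y - z, M (y - z)⟫ = ⟪y, M y⟫ - 2 * ⟪y, M z⟫ + ⟪z, M z⟫ := by
    simp only [map_sub, inner_sub_left, inner_sub_right, hs y z]; ring
  have emain : ⟪x + y + z, M (x + y + z)⟫ =
      ⟪x, M x⟫ + ⟪y, M y⟫ + ⟪z, M z⟫ + 2 * ⟪x, M y⟫ + 2 * ⟪x, M z⟫ + 2 * ⟪y, M z⟫ := by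
    simp only [map_add, inner_add_left, inner_add_right, hs x y, hs x z, hs y z]; ring
  linarith [hQ (x - y), hQ (x - z), hQ (y - z)]

lemma aux_three_smul (M : H →L[ℝ] H) (hMsa : ∀ a b : H, ⟪M a, b⟫ = ⟪a, M b⟫)
    (hQ : ∀ w : H, 0 ≤ ⟪w, M w⟫) (s t r : ℝ) (x y z : H) :
    ⟪s • x + t • y + r • z, M (s • x + t • y + r • z)⟫ ≤
      3 * (s ^ 2 * ⟪x, M x⟫ + t ^ 2 * ⟪y, M y⟫ + r ^ 2 * ⟪z, M z⟫) := by
  have h := aux_three M hMsa hQ (s • x) (t • y) (r • z)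
  rw [aux_smul_q, aux_smul_q, aux_smul_q] at h
  exact h
end

set_option maxHeartbeats 1000000 in
/-- bounded combinations of p_n − x_n, u_n, v_n are controlled by ℓ_n², ℓ_{n−1}². -/
theorem bounded_combination_estimate
    {H : Type*} [NormedAddCommGroup H] [InnerProductSpace ℝ H] [CompleteSpace H]
    (M : H →L[ℝ] H)
    (hMsa : ∀ a b : H, ⟪M a, b⟫ = ⟪a, M b⟫)
    (hMpos : ∃ c > (0:ℝ), ∀ a : H, ⟪a, M a⟫ ≥ c * ‖a‖ ^ 2)
    (Minv : H →L[ℝ] H)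
    (hMinv₁ : ∀ a : H, Minv (M a) = a)
    (hMinv₂ : ∀ a : H, M (Minv a) = a)
    (β : ℝ) (hβ : 0 < β)
    (A : H → Set H)
    (hAmono : ∀ a b ua vb : H, ua ∈ A a → vb ∈ A b → ⟪ua - vb, a - b⟫ ≥ 0)
    (hAmax : ∀ a ua : H, (∀ b vb : H, vb ∈ A b → ⟪ua - vb, a - b⟫ ≥ 0) → ua ∈ A a)
    (C : H → H)
    (hC : ∀ a b : H, ⟪C a - C b, a - b⟫ ≥ (1 / β) * mnorm Minv (C a - C b) ^ 2)
    (hzer : ∃ w : H, -C w ∈ A w)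
    (ε : ℝ) (hε0 : 0 < ε) (hε1 : ε < min 1 (4 / (3 + β)))
    (ζ γ lam : ℕ → ℝ)
    (hζ : ∀ n, 0 ≤ ζ n ∧ ζ n ≤ 1 - ε)
    (hγ : ∀ n, ε ≤ γ n ∧ γ n ≤ (4 - 3 * ε) / β)
    (hlam : ∀ n, ε ≤ lam n ∧ lam n ≤ 2 - γ n * β / 2 - ε / 2)
    (x u v p y z : ℕ → H) (ℓsq : ℕ → ℝ)
    (hu0 : u 0 = 0) (hv0 : v 0 = 0)
    (hy : ∀ n, y n = x n + u n)
    (hz : ∀ n, z n = x n + (((1 - lam n) * γ n * β) / (2 - lam n * γ n * β)) • u n + v n)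
    (hp : ∀ n, M (z n) - M (p n) - γ n • C (y n) ∈ γ n • A (p n))
    (hx : ∀ n, x (n + 1) = x n + lam n • (p n - z n))
    (hℓ : ∀ n, ℓsq n = (lam n * (4 - 2 * lam n - γ n * β) / 2) *
      mnorm M (p n - x n + ((lam n * γ n * β) / (2 - lam n * γ n * β)) • u n
        - ((2 * (1 - lam n)) / (4 - 2 * lam n - γ n * β)) • v n) ^ 2)
    (hdev : ∀ n, (lam (n+1) * γ (n+1) * β / (2 - lam (n+1) * γ (n+1) * β)) * mnorm M (u (n+1)) ^ 2
        + (lam (n+1) * (2 - lam (n+1) * γ (n+1) * β) / (4 - 2 * lam (n+1) - γ (n+1) * β)) * mnorm M (v (n+1)) ^ 2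
        ≤ ζ n * ℓsq n)
    (a b c : ℕ → ℝ)
    (ha : ∃ Ca : ℝ, ∀ n, |a n| ≤ Ca)
    (hb : ∃ Cb : ℝ, ∀ n, |b n| ≤ Cb)
    (hc : ∃ Cc : ℝ, ∀ n, |c n| ≤ Cc) :
    ∃ c₁ : ℝ, 0 < c₁ ∧ ∃ c₂ : ℝ, 0 < c₂ ∧
      ∀ n : ℕ, 1 ≤ n →
        mnorm M (a n • (p n - x n) + b n • u n + c n • v n) ^ 2 ≤
          c₁ * ℓsq n + c₂ * ℓsq (n - 1) := by
  obtain ⟨cM, hcM, hMlow⟩ := hMpos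
  have hQ0 : ∀ w : H, 0 ≤ ⟪w, M w⟫ := fun w =>
    le_trans (by positivity) (hMlow w)
  have hm2 : ∀ w : H, mnorm M w ^ 2 = ⟪w, M w⟫ := fun w => Real.sq_sqrt (hQ0 w)
  obtain ⟨Ca, hCa⟩ := ha
  obtain ⟨Cb, hCb⟩ := hb
  obtain ⟨Cc, hCc⟩ := hc
  have hCa0 : 0 ≤ Ca := le_trans (abs_nonneg _) (hCa 0)
  have hCb0 : 0 ≤ Cb := le_trans (abs_nonneg _) (hCb 0)
  have hCc0 : 0 ≤ Cc := le_trans (abs_nonneg _) (hCc 0)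
  have hε1' : ε < 1 := lt_of_lt_of_le hε1 (min_le_left _ _)
  -- parameter facts at every index
  have hfacts : ∀ k : ℕ, ε ≤ 4 - 2 * lam k - γ k * β ∧ 7 * ε / 8 ≤ 2 - lam k * γ k * β ∧
      ε ^ 2 * β ≤ lam k * γ k * β ∧ ε ^ 2 / 2 ≤ lam k * (4 - 2 * lam k - γ k * β) / 2 := by
    intro k
    obtain ⟨hγ1, hγ2⟩ := hγ k
    obtain ⟨hl1, hl2⟩ := hlam k
    have htub : γ k * β ≤ 4 - 3 * ε := (le_div_iff₀ hβ).mp hγ2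
    have hγpos : 0 < γ k := lt_of_lt_of_le hε0 hγ1
    have ht0 : 0 < γ k * β := mul_pos hγpos hβ
    have h4 : ε ≤ 4 - 2 * lam k - γ k * β := by linarith
    have hprod : lam k * (γ k * β) ≤ (2 - γ k * β / 2 - ε / 2) * (γ k * β) :=
      mul_le_mul_of_nonneg_right hl2 ht0.le
    have h2 : 7 * ε / 8 ≤ 2 - lam k * γ k * β := by
      nlinarith [sq_nonneg (γ k * β - 2 + ε / 2), mul_nonneg hε0.le (by linarith : (0:ℝ) ≤ 1 - ε)]
    have hlt : ε ^ 2 * β ≤ lam k * γ k * β := by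
      have : ε * ε ≤ lam k * γ k := mul_le_mul hl1 hγ1 hε0.le (le_trans hε0.le hl1)
      nlinarith
    refine ⟨h4, h2, hlt, ?_⟩
    nlinarith [mul_le_mul hl1 h4 hε0.le (le_trans hε0.le hl1)]
  have hℓnn : ∀ k : ℕ, 0 ≤ ℓsq k := by
    intro k
    rw [hℓ k]
    have hκ := (hfacts k).2.2.2
    have : (0:ℝ) ≤ lam k * (4 - 2 * lam k - γ k * β) / 2 := le_trans (by positivity) hκ
    positivity
  -- constants
  set Bb : ℝ := Cb + 16 * Ca / (7 * ε) with hBb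
  set Bc : ℝ := Cc + 2 * Ca / ε with hBc
  have hBb0 : 0 ≤ Bb := by positivity
  have hBc0 : 0 ≤ Bc := by positivity
  refine ⟨6 * Ca ^ 2 / ε ^ 2 + 1, by positivity,
    6 * Bb ^ 2 / (ε ^ 2 * β) + 96 / (7 * ε ^ 2) * Bc ^ 2 + 1, by positivity, ?_⟩
  intro n hn
  obtain ⟨m, rfl⟩ : ∃ m, n = m + 1 := ⟨n - 1, (Nat.succ_pred_eq_of_pos hn).symm⟩
  set n := m + 1 with hnn
  have hsub : n - 1 = m := rfl
  obtain ⟨h4, h2, hlt, hκ⟩ := hfacts n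
  have hεβ : 0 < ε ^ 2 * β := by positivity
  -- coefficients
  set α : ℝ := lam n * γ n * β / (2 - lam n * γ n * β) with hα
  set δ : ℝ := 2 * (1 - lam n) / (4 - 2 * lam n - γ n * β) with hδ
  have hden2 : 0 < 2 - lam n * γ n * β := lt_of_lt_of_le (by linarith) h2
  have hden4 : 0 < 4 - 2 * lam n - γ n * β := lt_of_lt_of_le hε0 h4
  have hαnn : 0 ≤ α := div_nonneg (le_trans hεβ.le hlt) hden2.le
  have hαlow : ε ^ 2 * β / 2 ≤ α := by
    rw [hα, div_le_div_iff₀ (by norm_num) hden2]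
    nlinarith [le_trans hεβ.le hlt]
  have hαhigh : α ≤ 16 / (7 * ε) := by
    rw [hα, div_le_div_iff₀ hden2 (by positivity)]
    have hub : lam n * γ n * β ≤ 2 - 7 * ε / 8 := by linarith
    nlinarith [mul_le_mul_of_nonneg_left hub (by positivity : (0:ℝ) ≤ 7 * ε), hε0.le]
  have hl2n : lam n ≤ 2 := by
    obtain ⟨hγ1, _⟩ := hγ n
    obtain ⟨_, hl2⟩ := hlam n
    nlinarith
  have hlen := (hlam n).1
  have hδabs : |δ| ≤ 2 / ε := by
    rw [hδ, abs_div, abs_of_pos hden4]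
    refine div_le_div₀ (by norm_num) ?_ hε0 h4
    rw [abs_le]
    constructor <;> nlinarith
  -- ℓsq n controls q
  set q : H := p n - x n + α • u n - δ • v n with hq
  have hℓn : ℓsq n = lam n * (4 - 2 * lam n - γ n * β) / 2 * ⟪q, M q⟫ := by
    rw [hℓ n, hm2]
  have hQq : ⟪q, M q⟫ ≤ 2 / ε ^ 2 * ℓsq n := by
    rw [hℓn]
    calc ⟪q, M q⟫ = 2 / ε ^ 2 * (ε ^ 2 / 2 * ⟪q, M q⟫) := by field_simp
    _ ≤ 2 / ε ^ 2 * (lam n * (4 - 2 * lam n - γ n * β) / 2 * ⟪q, M q⟫) :=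
        mul_le_mul_of_nonneg_left (mul_le_mul_of_nonneg_right hκ (hQ0 q))
          (by positivity)
  -- ℓsq m controls u n, v n
  have hw : 7 * ε ^ 2 / 32 ≤ lam n * (2 - lam n * γ n * β) / (4 - 2 * lam n - γ n * β) := by
    have hγn1 := (hγ n).1
    have hprodw : ε * (7 * ε / 8) ≤ lam n * (2 - lam n * γ n * β) :=
      mul_le_mul hlen h2 (by linarith) (by linarith)
    rw [le_div_iff₀ hden4]
    nlinarith [mul_nonneg (sq_nonneg ε) (by nlinarith : (0:ℝ) ≤ 2 * lam n + γ n * β)]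
  have hdevn := hdev m
  rw [hm2, hm2] at hdevn
  have hζm := (hζ m).2
  have hdev' : α * ⟪u n, M (u n)⟫ +
      (lam n * (2 - lam n * γ n * β) / (4 - 2 * lam n - γ n * β)) * ⟪v n, M (v n)⟫ ≤ ℓsq m := by
    refine le_trans hdevn ?_
    calc ζ m * ℓsq m ≤ 1 * ℓsq m := mul_le_mul_of_nonneg_right (by linarith) (hℓnn m)
    _ = ℓsq m := one_mul _
  have hwnn : (0:ℝ) ≤ lam n * (2 - lam n * γ n * β) / (4 - 2 * lam n - γ n * β) :=
    le_trans (by positivity) hw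
  have hu1 : ε ^ 2 * β / 2 * ⟪u n, M (u n)⟫ ≤ ℓsq m := by
    nlinarith [mul_le_mul_of_nonneg_right hαlow (hQ0 (u n)), mul_nonneg hwnn (hQ0 (v n))]
  have hv1 : 7 * ε ^ 2 / 32 * ⟪v n, M (v n)⟫ ≤ ℓsq m := by
    nlinarith [mul_le_mul_of_nonneg_right hw (hQ0 (v n)), mul_nonneg hαnn (hQ0 (u n))]
  have hQu : ⟪u n, M (u n)⟫ ≤ 2 / (ε ^ 2 * β) * ℓsq m := by
    calc ⟪u n, M (u n)⟫ = 2 / (ε ^ 2 * β) * (ε ^ 2 * β / 2 * ⟪u n, M (u n)⟫) := by field_simp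
    _ ≤ 2 / (ε ^ 2 * β) * ℓsq m := mul_le_mul_of_nonneg_left hu1 (by positivity)
  have hQv : ⟪v n, M (v n)⟫ ≤ 32 / (7 * ε ^ 2) * ℓsq m := by
    calc ⟪v n, M (v n)⟫ = 32 / (7 * ε ^ 2) * (7 * ε ^ 2 / 32 * ⟪v n, M (v n)⟫) := by field_simp
    _ ≤ 32 / (7 * ε ^ 2) * ℓsq m := mul_le_mul_of_nonneg_left hv1 (by positivity)
  -- decompose the combination
  have hcombo : a n • (p n - x n) + b n • u n + c n • v n =
      a n • q + (b n - a n * α) • u n + (c n + a n * δ) • v n := by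
    rw [hq]
    module
  have hkey := aux_three_smul M hMsa hQ0 (a n) (b n - a n * α) (c n + a n * δ) q (u n) (v n)
  rw [hcombo, hm2]
  -- coefficient bounds
  have han2 : a n ^ 2 ≤ Ca ^ 2 := by
    have h' := abs_le.mp (hCa n)
    exact sq_le_sq' (by linarith [h'.1]) h'.2
  have hbn2 : (b n - a n * α) ^ 2 ≤ Bb ^ 2 := by
    have h1 : |b n - a n * α| ≤ Bb := by
      calc |b n - a n * α| ≤ |b n| + |a n| * |α| := by
            rw [← abs_mul]; exact abs_sub _ _
      _ ≤ Cb + Ca * (16 / (7 * ε)) := by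
            refine add_le_add (hCb n) (mul_le_mul (hCa n) ?_ (abs_nonneg _) hCa0)
            rw [abs_of_nonneg hαnn]; exact hαhigh
      _ = Bb := by rw [hBb]; ring
    have h' := abs_le.mp h1
    exact sq_le_sq' (by linarith [h'.1]) h'.2
  have hcn2 : (c n + a n * δ) ^ 2 ≤ Bc ^ 2 := by
    have h1 : |c n + a n * δ| ≤ Bc := by
      calc |c n + a n * δ| ≤ |c n| + |a n| * |δ| := by
            rw [← abs_mul]; exact abs_add_le _ _
      _ ≤ Cc + Ca * (2 / ε) := add_le_add (hCc n) (mul_le_mul (hCa n) hδabs (abs_nonneg _) hCa0)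
      _ = Bc := by rw [hBc]; ring
    have h' := abs_le.mp h1
    exact sq_le_sq' (by linarith [h'.1]) h'.2
  -- put it together
  have hq1 : a n ^ 2 * ⟪q, M q⟫ ≤ Ca ^ 2 * (2 / ε ^ 2 * ℓsq n) := by
    exact mul_le_mul han2 hQq (hQ0 q) (sq_nonneg Ca)
  have hq2 : (b n - a n * α) ^ 2 * ⟪u n, M (u n)⟫ ≤ Bb ^ 2 * (2 / (ε ^ 2 * β) * ℓsq m) := by
    exact mul_le_mul hbn2 hQu (hQ0 (u n)) (sq_nonneg Bb)
  have hq3 : (c n + a n * δ) ^ 2 * ⟪v n, M (v n)⟫ ≤ Bc ^ 2 * (32 / (7 * ε ^ 2) * ℓsq m) := by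
    exact mul_le_mul hcn2 hQv (hQ0 (v n)) (sq_nonneg Bc)
  have hfin : ⟪a n • q + (b n - a n * α) • u n + (c n + a n * δ) • v n,
      M (a n • q + (b n - a n * α) • u n + (c n + a n * δ) • v n)⟫ ≤
      (6 * Ca ^ 2 / ε ^ 2 + 1) * ℓsq n +
        (6 * Bb ^ 2 / (ε ^ 2 * β) + 96 / (7 * ε ^ 2) * Bc ^ 2 + 1) * ℓsq m := by
    have h1n := hℓnn n
    have h1m := hℓnn m
    have hq1' : 3 * (a n ^ 2 * ⟪q, M q⟫) ≤ 6 * Ca ^ 2 / ε ^ 2 * ℓsq n := by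
      calc 3 * (a n ^ 2 * ⟪q, M q⟫) ≤ 3 * (Ca ^ 2 * (2 / ε ^ 2 * ℓsq n)) := by linarith
      _ = 6 * Ca ^ 2 / ε ^ 2 * ℓsq n := by ring
    have hq2' : 3 * ((b n - a n * α) ^ 2 * ⟪u n, M (u n)⟫) ≤ 6 * Bb ^ 2 / (ε ^ 2 * β) * ℓsq m := by
      calc 3 * ((b n - a n * α) ^ 2 * ⟪u n, M (u n)⟫)
          ≤ 3 * (Bb ^ 2 * (2 / (ε ^ 2 * β) * ℓsq m)) := by linarith
      _ = 6 * Bb ^ 2 / (ε ^ 2 * β) * ℓsq m := by ring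
    have hq3' : 3 * ((c n + a n * δ) ^ 2 * ⟪v n, M (v n)⟫) ≤ 96 / (7 * ε ^ 2) * Bc ^ 2 * ℓsq m := by
      calc 3 * ((c n + a n * δ) ^ 2 * ⟪v n, M (v n)⟫)
          ≤ 3 * (Bc ^ 2 * (32 / (7 * ε ^ 2) * ℓsq m)) := by linarith
      _ = 96 / (7 * ε ^ 2) * Bc ^ 2 * ℓsq m := by ring
    have e : (6 * Ca ^ 2 / ε ^ 2 + 1) * ℓsq n +
        (6 * Bb ^ 2 / (ε ^ 2 * β) + 96 / (7 * ε ^ 2) * Bc ^ 2 + 1) * ℓsq m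
        = 6 * Ca ^ 2 / ε ^ 2 * ℓsq n + 6 * Bb ^ 2 / (ε ^ 2 * β) * ℓsq m
          + 96 / (7 * ε ^ 2) * Bc ^ 2 * ℓsq m + ℓsq n + ℓsq m := by ring
    rw [e]
    linarith [hkey]
  simpa [hsub] using hfin
end

section
/- Let L : H → K be a bounded linear operator and let τ, σ > 0 satisfy στ‖L‖² < 1. On the Hilbert space H × K with inner product ⟨(x, μ), (x', μ')⟩ := ⟨x, x'⟩ + ⟨μ, μ'⟩, define the bounded linear operator M by M(x, μ) := (x − τL*μ, −τLx + (τ/σ)μ). Then M is self-adjoint and strongly positive: there exists c > 0 such that ⟨w, Mw⟩ ≥ c‖w‖² for all w ∈ H × K. -/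
open scoped RealInnerProductSpace

/-- on `H × K` (with inner product `⟨(x,μ),(x',μ')⟩ = ⟨x,x'⟩ + ⟨μ,μ'⟩`),
the operator `M(x, μ) := (x − τL*μ, −τLx + (τ/σ)μ)` is self-adjoint and strongly
positive whenever `στ‖L‖² < 1`.  Stated componentwise. -/
theorem primal_dual_metric_selfadjoint_strongly_positive
    {H K : Type*} [NormedAddCommGroup H] [InnerProductSpace ℝ H] [CompleteSpace H]
    [NormedAddCommGroup K] [InnerProductSpace ℝ K] [CompleteSpace K]
    (L : H →L[ℝ] K) (τ σ : ℝ) (hτ : 0 < τ) (hσ : 0 < σ)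
    (hstep : σ * τ * ‖L‖ ^ 2 < 1) :
    (∀ (x : H) (μ : K) (x' : H) (μ' : K),
        ⟪x - τ • L.adjoint μ, x'⟫ + ⟪-(τ • L x) + (τ / σ) • μ, μ'⟫ =
          ⟪x, x' - τ • L.adjoint μ'⟫ + ⟪μ, -(τ • L x') + (τ / σ) • μ'⟫) ∧
      ∃ c > (0:ℝ), ∀ (x : H) (μ : K),
        ⟪x, x - τ • L.adjoint μ⟫ + ⟪μ, -(τ • L x) + (τ / σ) • μ⟫ ≥
          c * (‖x‖ ^ 2 + ‖μ‖ ^ 2) := by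
  have hδ0 : 0 ≤ σ * τ * ‖L‖ ^ 2 := by positivity
  set δ := σ * τ * ‖L‖ ^ 2 with hδ
  set s := Real.sqrt δ with hs
  set t := Real.sqrt (τ / σ) with ht
  have hs0 : 0 ≤ s := Real.sqrt_nonneg _
  have ht0 : 0 ≤ t := Real.sqrt_nonneg _
  have hs2 : s ^ 2 = δ := Real.sq_sqrt hδ0
  have ht2 : t ^ 2 = τ / σ := Real.sq_sqrt (by positivity)
  have hs1 : s < 1 := by
    rw [hs, show (1:ℝ) = Real.sqrt 1 by simp]
    exact Real.sqrt_lt_sqrt hδ0 (by simpa using hstep)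
  have hst : s * t = τ * ‖L‖ := by
    rw [hs, ht, ← Real.sqrt_mul hδ0]
    have : δ * (τ / σ) = (τ * ‖L‖) ^ 2 := by
      field_simp [hδ]; ring
    rw [this, Real.sqrt_sq (by positivity)]
  constructor
  · intro x μ x' μ'
    simp only [inner_sub_left, inner_sub_right, inner_add_left, inner_add_right,
      inner_neg_left, inner_neg_right, inner_smul_left, inner_smul_right,
      ContinuousLinearMap.adjoint_inner_left, ContinuousLinearMap.adjoint_inner_right,
      RCLike.conj_to_real]
    ring
  · refine ⟨(1 - s) * min 1 (τ / σ), by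
      have : 0 < min 1 (τ / σ) := lt_min one_pos (by positivity)
      nlinarith, ?_⟩
    intro x μ
    have hres : ⟪x, x - τ • L.adjoint μ⟫ + ⟪μ, -(τ • L x) + (τ / σ) • μ⟫ =
        ‖x‖ ^ 2 - 2 * τ * ⟪μ, L x⟫ + (τ / σ) * ‖μ‖ ^ 2 := by
      simp only [inner_sub_right, inner_add_right, inner_neg_right, inner_smul_right,
        ContinuousLinearMap.adjoint_inner_right, real_inner_self_eq_norm_sq]
      rw [real_inner_comm (L x) μ]
      ring
    rw [hres]
    have hcs : ⟪μ, L x⟫ ≤ ‖μ‖ * (‖L‖ * ‖x‖) := by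
      calc ⟪μ, L x⟫ ≤ ‖μ‖ * ‖L x‖ := real_inner_le_norm μ (L x)
        _ ≤ ‖μ‖ * (‖L‖ * ‖x‖) := by
          exact mul_le_mul_of_nonneg_left (L.le_opNorm x) (norm_nonneg _)
    have hmin1 : min 1 (τ / σ) ≤ 1 := min_le_left _ _
    have hmin2 : min 1 (τ / σ) ≤ τ / σ := min_le_right _ _
    have hmin2' : min 1 (τ / σ) ≤ t ^ 2 := by rw [ht2]; exact hmin2
    have key : ‖x‖ ^ 2 - 2 * (s * t) * ‖x‖ * ‖μ‖ + t ^ 2 * ‖μ‖ ^ 2 ≥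
        (1 - s) * min 1 (τ / σ) * (‖x‖ ^ 2 + ‖μ‖ ^ 2) := by
      nlinarith [mul_nonneg hs0 (sq_nonneg (‖x‖ - t * ‖μ‖)),
        mul_nonneg (mul_nonneg (sub_nonneg.2 hs1.le) (sub_nonneg.2 hmin1)) (sq_nonneg ‖x‖),
        mul_nonneg (mul_nonneg (sub_nonneg.2 hs1.le) (sub_nonneg.2 hmin2')) (sq_nonneg ‖μ‖)]
    have hmul : τ * ⟪μ, L x⟫ ≤ τ * ‖L‖ * ‖x‖ * ‖μ‖ := by
      nlinarith [mul_le_mul_of_nonneg_left hcs (le_of_lt hτ)]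
    have heq : s * t * (‖x‖ * ‖μ‖) = τ * ‖L‖ * (‖x‖ * ‖μ‖) := by rw [hst]
    have ht2' : (τ / σ) * ‖μ‖ ^ 2 = t ^ 2 * ‖μ‖ ^ 2 := by rw [ht2]
    linarith [key, hmul, heq, ht2']
end
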